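/- arXiv:2401.15556 — 10 statements merged into one kernel-verified Lean document; each statement's English description precedes it below -/
import Mathlib

section
/- Let G be a Polish group. Then G admits a compatible two-sided invariant metric (i.e., G is TSI) if and only if for all sequences (g_p) and (g'_p) in G, the sequence (g_p·g'_p) converges to the identity if and only if (g'_p·g_p) converges to the identity. -/
open Filter Topology
open scoped Uniformity

/-! A two-sided invariant metric satisfies `d(xy, 1) = d(yx, 1)`, which gives one direction.
Conversely, the sequential condition forces small conjugation-invariant neighbourhoods of `1`:
otherwise there are `v_n → 1` and `k_n` with `k_n v_n k_n⁻¹` outside a fixed neighbourhood,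
although `k_n⁻¹ (k_n v_n) = v_n → 1`. Given such neighbourhoods and a pseudometric `d` for the
right uniformity, `D(x, y) = sup_{g,k} min (d(gxk, gyk)) 1` is a two-sided invariant metric, and
`D(x, y)` is small as soon as `y x⁻¹` lies in a small conjugation-invariant neighbourhood, so `D`
induces the topology of `G`. -/

/-- A Polish group is TSI if it admits a compatible two-sided invariant metric. -/
def IsTSI (G : Type*) [Group G] [t : TopologicalSpace G] : Prop :=
  ∃ m : MetricSpace G, m.toUniformSpace.toTopologicalSpace = t ∧
    (∀ g h k : G, @dist G m.toDist (g * h) (g * k) = @dist G m.toDist h k) ∧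
    (∀ g h k : G, @dist G m.toDist (h * g) (k * g) = @dist G m.toDist h k)

theorem IsTSI.tendsto_mul_swap_iff {G ι : Type*} [Group G] [TopologicalSpace G] (hG : IsTSI G)
    {l : Filter ι} (f f' : ι → G) :
    Tendsto (fun i => f i * f' i) l (𝓝 1) ↔ Tendsto (fun i => f' i * f i) l (𝓝 1) := by
  obtain ⟨m, rfl, hl, hr⟩ := hG
  have hswap (x y : G) : dist (x * y) 1 = dist (y * x) 1 := by
    rw [← hr x, ← hl x⁻¹, one_mul, mul_assoc, inv_mul_cancel_left, inv_mul_cancel]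
  rw [tendsto_iff_dist_tendsto_zero, tendsto_iff_dist_tendsto_zero (f := fun i => f' i * f i)]
  exact tendsto_congr fun i => hswap (f i) (f' i)

-- Equivalently, every neighbourhood of `1` contains a conjugation-invariant one, `⋃ g, g V g⁻¹`.
def IsSIN (G : Type*) [Group G] [TopologicalSpace G] : Prop :=
  ∀ U ∈ 𝓝 (1 : G), ∃ V ∈ 𝓝 (1 : G), ∀ g, ∀ v ∈ V, g * v * g⁻¹ ∈ U

theorem isSIN_of_tendsto_mul_swap {G : Type*} [Group G] [TopologicalSpace G]
    [FirstCountableTopology G]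
    (H : ∀ g g' : ℕ → G, Tendsto (fun p => g p * g' p) atTop (𝓝 1) →
      Tendsto (fun p => g' p * g p) atTop (𝓝 1)) :
    IsSIN G := by
  intro U hU
  by_contra! hcon
  obtain ⟨B, hB⟩ := (𝓝 (1 : G)).exists_antitone_basis
  choose k v hv hvU using fun n => hcon (B n) (hB.mem n)
  have hconj : Tendsto (fun n => k n * v n * (k n)⁻¹) atTop (𝓝 1) :=
    H (fun n => (k n)⁻¹) (fun n => k n * v n) (by simpa using hB.tendsto hv)
  obtain ⟨n, hn⟩ := (hconj.eventually_mem hU).exists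
  exact hvU n hn

theorem min_one_le_add_min_one {a b c : ℝ} (hb : 0 ≤ b) (hc : 0 ≤ c) (h : a ≤ b + c) :
    min a 1 ≤ min b 1 + min c 1 := by
  simp only [min_def]
  split_ifs <;> linarith

section supTranslateDist

variable {G : Type*} [Group G] [PseudoMetricSpace G]

-- Truncating at `1` keeps the supremum bounded: an unbounded `iSup` in `ℝ` is the junk value `0`.
noncomputable def supTranslateDist (x y : G) : ℝ :=
  ⨆ p : G × G, min (dist (p.1 * x * p.2) (p.1 * y * p.2)) 1

theorem min_dist_le_supTranslateDist (x y g k : G) :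
    min (dist (g * x * k) (g * y * k)) 1 ≤ supTranslateDist x y :=
  le_ciSup (f := fun p : G × G => min (dist (p.1 * x * p.2) (p.1 * y * p.2)) 1)
    ⟨1, by rintro _ ⟨p, rfl⟩; exact min_le_right _ _⟩ (g, k)

theorem min_dist_one_le_supTranslateDist (x y : G) : min (dist x y) 1 ≤ supTranslateDist x y := by
  simpa using min_dist_le_supTranslateDist x y 1 1

theorem supTranslateDist_le {x y : G} {r : ℝ} (h : ∀ g k, dist (g * x * k) (g * y * k) ≤ r) :
    supTranslateDist x y ≤ r :=
  ciSup_le fun p => (min_le_left _ _).trans (h p.1 p.2)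

theorem supTranslateDist_self (x : G) : supTranslateDist x x = 0 :=
  (supTranslateDist_le fun _ _ => (dist_self _).le).antisymm
    ((le_min dist_nonneg zero_le_one).trans (min_dist_one_le_supTranslateDist x x))

theorem supTranslateDist_comm (x y : G) : supTranslateDist x y = supTranslateDist y x := by
  simp only [supTranslateDist, dist_comm]

theorem supTranslateDist_triangle (x y z : G) :
    supTranslateDist x z ≤ supTranslateDist x y + supTranslateDist y z :=
  ciSup_le fun p => (min_one_le_add_min_one dist_nonneg dist_nonneg (dist_triangle _ _ _)).trans
    (add_le_add (min_dist_le_supTranslateDist x y p.1 p.2)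
      (min_dist_le_supTranslateDist y z p.1 p.2))

theorem supTranslateDist_mul_left (g x y : G) :
    supTranslateDist (g * x) (g * y) = supTranslateDist x y := by
  rw [supTranslateDist, ← (Equiv.prodCongr (Equiv.mulRight g⁻¹) (Equiv.refl G)).iSup_comp]
  simp [supTranslateDist, mul_assoc]

theorem supTranslateDist_mul_right (g x y : G) :
    supTranslateDist (x * g) (y * g) = supTranslateDist x y := by
  rw [supTranslateDist, ← (Equiv.prodCongr (Equiv.refl G) (Equiv.mulLeft g⁻¹)).iSup_comp]
  simp [supTranslateDist, mul_assoc]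

theorem dist_eq_zero_of_supTranslateDist_eq_zero {x y : G} (h : supTranslateDist x y = 0) :
    dist x y = 0 := by
  have := h ▸ min_dist_one_le_supTranslateDist x y
  exact le_antisymm ((min_le_iff.1 this).resolve_right (by norm_num)) dist_nonneg

theorem dist_lt_of_supTranslateDist_lt {x y : G} {ε : ℝ} (hε : ε ≤ 1)
    (h : supTranslateDist x y < ε) : dist x y < ε := by
  have := (min_dist_one_le_supTranslateDist x y).trans_lt h
  exact (min_lt_iff.1 this).resolve_right (by linarith)

end supTranslateDist

theorem IsSIN.isTSI {G : Type*} [Group G] [PseudoMetricSpace G] [IsRightUniformGroup G]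
    [T0Space G] (hG : IsSIN G) : IsTSI G := by
  have hsmall (x : G) (ε : ℝ) (hε : 0 < ε) : ∀ᶠ y in 𝓝 x, supTranslateDist x y < ε := by
    obtain ⟨W, hW, hWε⟩ := mem_comap.1 <|
      uniformity_eq_comap_mul_inv_nhds_one G ▸ Metric.dist_mem_uniformity (half_pos hε)
    obtain ⟨V, hV, hVW⟩ := hG W hW
    have hx : Tendsto (· * x⁻¹) (𝓝 x) (𝓝 1) := by
      simpa using (continuous_mul_const x⁻¹).tendsto x
    filter_upwards [hx hV] with y hy
    refine (supTranslateDist_le fun g k => (@hWε (g * x * k, g * y * k) ?_).le).trans_lt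
      (half_lt_self hε)
    simpa [mul_assoc] using hVW g _ hy
  refine ⟨.ofDistTopology supTranslateDist supTranslateDist_self supTranslateDist_comm
    supTranslateDist_triangle (fun s => ⟨fun hs x hx => ?_, fun hs => ?_⟩)
    fun x y h => Inseparable.eq (Metric.inseparable_iff.2
      (dist_eq_zero_of_supTranslateDist_eq_zero h)),
    rfl, supTranslateDist_mul_left, supTranslateDist_mul_right⟩
  · obtain ⟨ε, hε, hball⟩ := Metric.isOpen_iff.1 hs x hx
    exact ⟨min ε 1, lt_min hε one_pos, fun y hy => hball <| Metric.mem_ball'.2 <|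
      (dist_lt_of_supTranslateDist_lt (min_le_right _ _) hy).trans_le (min_le_left _ _)⟩
  · refine isOpen_iff_mem_nhds.2 fun x hx => ?_
    obtain ⟨ε, hε, hball⟩ := hs x hx
    filter_upwards [hsmall x ε hε] using hball

theorem isTSI_of_tendsto_mul_swap {G : Type*} [Group G] [TopologicalSpace G]
    [IsTopologicalGroup G] [FirstCountableTopology G] [T0Space G]
    (H : ∀ g g' : ℕ → G, Tendsto (fun p => g p * g' p) atTop (𝓝 1) →
      Tendsto (fun p => g' p * g p) atTop (𝓝 1)) :
    IsTSI G := by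
  let := IsTopologicalGroup.rightUniformSpace G
  have : IsRightUniformGroup G := { uniformity_eq := rfl }
  have : (𝓤 G).IsCountablyGenerated := by
    rw [uniformity_eq_comap_mul_inv_nhds_one G]
    infer_instance
  let := UniformSpace.pseudoMetricSpace G
  exact (isSIN_of_tendsto_mul_swap H).isTSI

/-- A Polish group `G` is TSI iff for all sequences `(g_p)`, `(g'_p)` in `G`,
`g_p * g'_p → 1` iff `g'_p * g_p → 1`. -/
theorem stmt_0 (G : Type*) [Group G] [TopologicalSpace G] [IsTopologicalGroup G]
    [PolishSpace G] :
    IsTSI G ↔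
      ∀ g g' : ℕ → G,
        Tendsto (fun p => g p * g' p) atTop (𝓝 1) ↔
          Tendsto (fun p => g' p * g p) atTop (𝓝 1) :=
  ⟨fun hG g g' => hG.tendsto_mul_swap_iff g g',
    fun H => isTSI_of_tendsto_mul_swap fun g g' => (H g g').1⟩
end

section
/- Let G be a TSI Polish group with compatible two-sided invariant metric d, and let x,y ∈ G^ω. Define, for m ≤ n, d(x,y)|_{[m,n]} = d(x(m)···x(n), y(m)···y(n)). Then the sequence (x(0)···x(n)·y(n)^{-1}···y(0)^{-1})_n converges in G if and only if lim_m sup_{n>m} d(x,y)|_{[m,n]} = 0. -/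
open Filter Topology

/-- The partial product `x(0) ⋯ x(n)`. -/
def partialProd {G : Type*} [Monoid G] (x : ℕ → G) (n : ℕ) : G :=
  ((List.range (n + 1)).map x).prod

/-- The segment product `x(m) ⋯ x(n)`. -/
def segProd {G : Type*} [Monoid G] (x : ℕ → G) (m n : ℕ) : G :=
  ((List.range' m (n + 1 - m)).map x).prod

/-!
A two-sided invariant metric makes `G` a uniform group, so its completion `Ĝ` is a group in
which `G` is a dense subgroup. Since `G` is Polish, it is a Gδ in `Ĝ`, and so is every
translate `zG`; by Baire's theorem `G` and `zG` meet, hence `z ∈ G` and `d` is complete.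
Invariance gives `d(w n, w m) = d(x(m+1)⋯x(n), y(m+1)⋯y(n))` for
`w n = x(0)⋯x(n)·y(n)⁻¹⋯y(0)⁻¹`, so the condition on segments says exactly that `w` is Cauchy.
-/

open Set TopologicalSpace

theorem Topology.IsEmbedding.isGδ_range {X Y : Type*} [TopologicalSpace X]
    [IsCompletelyMetrizableSpace X] [TopologicalSpace Y] [T2Space Y] [PerfectlyNormalSpace Y]
    {j : X → Y} (hj : IsEmbedding j) : IsGδ (range j) := by
  let := upgradeIsCompletelyMetrizable X
  -- `range j` is the set of points of its closure at which `j⁻¹` has oscillation zero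
  set U : ℝ → Set Y := fun ε =>
    ⋃₀ {V | IsOpen V ∧ ∀ a ∈ j ⁻¹' V, ∀ b ∈ j ⁻¹' V, dist a b < ε}
  have hrange : range j = closure (range j) ∩ ⋂ n : ℕ, U (1 / (n + 1)) := by
    refine Subset.antisymm (fun y hy => ⟨subset_closure hy, mem_iInter.2 fun n => ?_⟩) ?_
    · obtain ⟨x, rfl⟩ := hy
      obtain ⟨V, hV, hVx⟩ :=
        hj.isInducing.isOpen_iff.1 (@Metric.isOpen_ball _ _ x (1 / (2 * (n + 1))))
      refine ⟨V, ⟨hV, fun a ha b hb => ?_⟩, ?_⟩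
      · rw [hVx] at ha hb
        calc dist a b ≤ dist a x + dist b x := dist_triangle_right a b x
          _ < 1 / (2 * (n + 1)) + 1 / (2 * (n + 1)) := add_lt_add ha hb
          _ = 1 / (n + 1) := by field_simp; ring
      · show x ∈ j ⁻¹' V
        rw [hVx]
        exact Metric.mem_ball_self (by positivity)
    · rintro y ⟨hy_cl, hy_U⟩
      have : NeBot (comap j (𝓝 y)) := comap_neBot fun t ht => by
        obtain ⟨_, hzt, x, rfl⟩ := mem_closure_iff_nhds.1 hy_cl t ht
        exact ⟨x, hzt⟩
      have hcauchy : Cauchy (comap j (𝓝 y)) := by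
        refine Metric.cauchy_iff.2 ⟨this, fun ε hε => ?_⟩
        obtain ⟨n, hn⟩ := exists_nat_one_div_lt hε
        obtain ⟨V, ⟨hV, hVsmall⟩, hyV⟩ := mem_iInter.1 hy_U n
        exact ⟨j ⁻¹' V, preimage_mem_comap (hV.mem_nhds hyV),
          fun a ha b hb => (hVsmall a ha b hb).trans hn⟩
      obtain ⟨x, hx⟩ := CompleteSpace.complete hcauchy
      exact ⟨x, tendsto_nhds_unique ((hj.continuous.tendsto x).mono_left hx) tendsto_comap⟩
  rw [hrange]
  exact isClosed_closure.isGδ.inter (.iInter fun n => (isOpen_sUnion fun V hV => hV.1).isGδ)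

section Products

variable {M : Type*} [Monoid M] (x : ℕ → M)

theorem segProd_mul_segProd {l m n : ℕ} (hlm : l ≤ m + 1) (hmn : m ≤ n) :
    segProd x l m * segProd x (m + 1) n = segProd x l n := by
  have h := List.range'_append (s := l) (m := m + 1 - l) (n := n - m) (step := 1)
  rw [show l + 1 * (m + 1 - l) = m + 1 by omega, show m + 1 - l + (n - m) = n + 1 - l by omega] at h
  simp only [segProd, show n + 1 - (m + 1) = n - m by omega, ← h, List.map_append,
    List.prod_append]

theorem partialProd_eq_segProd_zero (n : ℕ) : partialProd x n = segProd x 0 n := by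
  simp [partialProd, segProd, List.range_eq_range']

theorem partialProd_mul_segProd {m n : ℕ} (h : m ≤ n) :
    partialProd x m * segProd x (m + 1) n = partialProd x n := by
  simp only [partialProd_eq_segProd_zero, segProd_mul_segProd x (Nat.zero_le _) h]

end Products

section TwoSidedInvariant

variable {G : Type*} [Group G] [MetricSpace G] [IsIsometricSMul G G] [IsIsometricSMul Gᵐᵒᵖ G]

theorem isUniformGroup_of_isIsometricSMul : IsUniformGroup G := by
  refine ⟨(LipschitzWith.of_dist_le_mul (K := 2) fun p q => ?_).uniformContinuous⟩
  calc dist (p.1 / p.2) (q.1 / q.2)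
      ≤ dist (p.1 / p.2) (q.1 / p.2) + dist (q.1 / p.2) (q.1 / q.2) := dist_triangle _ _ _
    _ = dist p.1 q.1 + dist p.2 q.2 := by rw [dist_div_right, dist_div_left]
    _ ≤ 2 * dist p q := by
      rw [Prod.dist_eq]
      linarith [le_max_left (dist p.1 q.1) (dist p.2 q.2),
        le_max_right (dist p.1 q.1) (dist p.2 q.2)]

open UniformSpace in
theorem completeSpace_of_isIsometricSMul [IsCompletelyMetrizableSpace G] : CompleteSpace G := by
  have := isUniformGroup_of_isIsometricSMul (G := G)
  -- `Completion` carries a group structure only for additive groups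
  have : IsUniformAddGroup (Additive G) := ⟨uniformContinuous_div (α := G)⟩
  let j : G → Completion (Additive G) := fun g => ((Additive.ofMul g : Additive G) : _)
  have hj : Isometry j := Completion.coe_isometry.comp fun _ _ => rfl
  have hj_mul (a b : G) : j (a * b) = j a + j b := Completion.coe_add _ _
  have hS : IsGδ (range j) := hj.isEmbedding.isGδ_range
  have hdense : Dense (range j) :=
    Completion.denseRange_coe.comp Additive.ofMul.surjective.denseRange
      (Completion.continuous_coe _)
  have hsurj : Function.Surjective j := by
    intro z
    obtain ⟨_, ⟨a, rfl⟩, b, hb⟩ := (Dense.inter_of_Gδ hS (hS.preimage (continuous_sub_left z))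
      hdense (hdense.preimage (isOpenMap_sub_left z))).nonempty
    exact ⟨b * a, by rw [hj_mul, hb, sub_add_cancel]⟩
  rw [completeSpace_iff_isComplete_range hj.isUniformInducing, hsurj.range_eq]
  exact isComplete_univ

theorem dist_mul_mul_inv_mul_mul_inv (p q a b : G) :
    dist (p * a * (q * b)⁻¹) (p * q⁻¹) = dist a b := by
  calc dist (p * a * (q * b)⁻¹) (p * q⁻¹)
      = dist (p * (a / b) * q⁻¹) (p * (b / b) * q⁻¹) := by
        congr 1 <;> simp [div_eq_mul_inv, mul_assoc]
    _ = dist a b := by rw [dist_mul_right, dist_mul_left, dist_div_right]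

theorem dist_partialProd_mul_inv (x y : ℕ → G) {m n : ℕ} (h : m ≤ n) :
    dist (partialProd x n * (partialProd y n)⁻¹) (partialProd x m * (partialProd y m)⁻¹) =
      dist (segProd x (m + 1) n) (segProd y (m + 1) n) := by
  rw [← partialProd_mul_segProd x h, ← partialProd_mul_segProd y h,
    dist_mul_mul_inv_mul_mul_inv]

theorem cauchySeq_partialProd_mul_inv_iff (x y : ℕ → G) :
    CauchySeq (fun n => partialProd x n * (partialProd y n)⁻¹) ↔
      ∀ ε > (0 : ℝ), ∃ m₀ : ℕ, ∀ m ≥ m₀, ∀ n > m, dist (segProd x m n) (segProd y m n) < ε := by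
  rw [Metric.cauchySeq_iff]
  constructor
  · intro h ε hε
    obtain ⟨N, hN⟩ := h ε hε
    refine ⟨N + 1, fun m hm n hmn => ?_⟩
    obtain ⟨k, rfl⟩ : ∃ k, m = k + 1 := ⟨m - 1, by omega⟩
    rw [← dist_partialProd_mul_inv x y (by omega : k ≤ n)]
    exact hN n (by omega) k (by omega)
  · intro h ε hε
    obtain ⟨m₀, hm₀⟩ := h (ε / 2) (half_pos hε)
    -- anchoring at index `m₀` only involves segments of length at least two, which `h` controls
    have hclose : ∀ n ≥ m₀ + 2, dist (partialProd x n * (partialProd y n)⁻¹)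
        (partialProd x m₀ * (partialProd y m₀)⁻¹) < ε / 2 := fun n hn => by
      rw [dist_partialProd_mul_inv x y (by omega : m₀ ≤ n)]
      exact hm₀ (m₀ + 1) (by omega) n (by omega)
    refine ⟨m₀ + 2, fun p hp q hq => ?_⟩
    linarith [dist_triangle_right (partialProd x p * (partialProd y p)⁻¹)
      (partialProd x q * (partialProd y q)⁻¹) (partialProd x m₀ * (partialProd y m₀)⁻¹),
      hclose p hp, hclose q hq]

end TwoSidedInvariant

theorem stmt_2_general (G : Type*) [Group G] [MetricSpace G]
    [PolishSpace G]
    (hleft : ∀ g h k : G, dist (g * h) (g * k) = dist h k)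
    (hright : ∀ g h k : G, dist (h * g) (k * g) = dist h k)
    (x y : ℕ → G) :
    (∃ l : G, Tendsto (fun n => partialProd x n * (partialProd y n)⁻¹) atTop (𝓝 l)) ↔
      (∀ ε > (0 : ℝ), ∃ m₀ : ℕ, ∀ m ≥ m₀, ∀ n > m,
        dist (segProd x m n) (segProd y m n) < ε) := by
  have : IsIsometricSMul G G := ⟨fun g => Isometry.of_dist_eq (hleft g)⟩
  have : IsIsometricSMul Gᵐᵒᵖ G := ⟨fun g => Isometry.of_dist_eq (hright g.unop)⟩
  have : CompleteSpace G := completeSpace_of_isIsometricSMul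
  rw [← cauchySeq_partialProd_mul_inv_iff]
  exact cauchy_map_iff_exists_tendsto.symm

/-- For a TSI Polish group `G` with compatible two-sided invariant metric `d` and
`x, y ∈ G^ω`, the sequence `(x(0)⋯x(n)·y(n)⁻¹⋯y(0)⁻¹)_n` converges in `G` iff
`lim_m sup_{n>m} d(x(m)⋯x(n), y(m)⋯y(n)) = 0`. -/
theorem stmt_2 (G : Type*) [Group G] [MetricSpace G] [IsTopologicalGroup G]
    [PolishSpace G]
    (hleft : ∀ g h k : G, dist (g * h) (g * k) = dist h k)
    (hright : ∀ g h k : G, dist (h * g) (k * g) = dist h k)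
    (x y : ℕ → G) :
    (∃ l : G, Tendsto (fun n => partialProd x n * (partialProd y n)⁻¹) atTop (𝓝 l)) ↔
      (∀ ε > (0 : ℝ), ∃ m₀ : ℕ, ∀ m ≥ m₀, ∀ n > m,
        dist (segProd x m n) (segProd y m n) < ε) :=
  stmt_2_general G hleft hright x y
end

section
/- Let G be a TSI Polish group with compatible two-sided invariant metric d, and let x,y ∈ G^ω. If the sequence (x(0)···x(n)·y(n)^{-1}···y(0)^{-1})_n converges in G, then lim_n d(x(n),y(n)) = 0. -/
open Filter Topology

/-! With `z n = x(0)⋯x(n)·(y(0)⋯y(n))⁻¹` and `a = x(0)⋯x(n)`, `b = (y(0)⋯y(n+1))⁻¹` we have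
`z (n+1) = a·x(n+1)·b` and `z n = a·y(n+1)·b`. A two-sided invariant metric ignores `a` and `b`,
so `d(x(n+1), y(n+1)) = d(z(n+1), z(n))`, which tends to `0` because `z` converges. -/

lemma partialProd_succ {G : Type*} [Monoid G] (x : ℕ → G) (n : ℕ) :
    partialProd x (n + 1) = partialProd x n * x (n + 1) := by
  simp [partialProd, List.range_succ, mul_assoc]

lemma dist_mul_mul_of_biinvariant {G : Type*} [Group G] [PseudoMetricSpace G]
    (hleft : ∀ g h k : G, dist (g * h) (g * k) = dist h k)
    (hright : ∀ g h k : G, dist (h * g) (k * g) = dist h k) (a b u v : G) :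
    dist (a * u * b) (a * v * b) = dist u v := by
  rw [hright, hleft]

lemma dist_partialProd_mul_inv_succ {G : Type*} [Group G] [PseudoMetricSpace G]
    (hleft : ∀ g h k : G, dist (g * h) (g * k) = dist h k)
    (hright : ∀ g h k : G, dist (h * g) (k * g) = dist h k) (x y : ℕ → G) (n : ℕ) :
    dist (partialProd x (n + 1) * (partialProd y (n + 1))⁻¹)
        (partialProd x n * (partialProd y n)⁻¹) = dist (x (n + 1)) (y (n + 1)) := by
  have hz : partialProd x n * (partialProd y n)⁻¹
      = partialProd x n * y (n + 1) * (partialProd y (n + 1))⁻¹ := by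
    simp [partialProd_succ, mul_assoc]
  rw [hz, partialProd_succ x, dist_mul_mul_of_biinvariant hleft hright]

lemma Filter.Tendsto.dist_succ_self {α : Type*} [PseudoMetricSpace α] {u : ℕ → α} {l : α}
    (hu : Tendsto u atTop (𝓝 l)) : Tendsto (fun n => dist (u (n + 1)) (u n)) atTop (𝓝 0) := by
  simpa using (hu.comp (tendsto_add_atTop_nat 1)).dist hu

theorem stmt_3_general (G : Type*) [Group G] [MetricSpace G]
    (hleft : ∀ g h k : G, dist (g * h) (g * k) = dist h k)
    (hright : ∀ g h k : G, dist (h * g) (k * g) = dist h k)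
    (x y : ℕ → G)
    (h : ∃ l : G, Tendsto (fun n => partialProd x n * (partialProd y n)⁻¹) atTop (𝓝 l)) :
    Tendsto (fun n => dist (x n) (y n)) atTop (𝓝 0) := by
  obtain ⟨l, hl⟩ := h
  refine (tendsto_add_atTop_iff_nat 1).mp ?_
  simpa only [dist_partialProd_mul_inv_succ hleft hright] using hl.dist_succ_self

/-- For a TSI Polish group `G` with compatible two-sided invariant metric `d` and
`x, y ∈ G^ω`, if `(x(0)⋯x(n)·y(n)⁻¹⋯y(0)⁻¹)_n` converges in `G`, then
`d(x(n), y(n)) → 0`. -/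
theorem stmt_3 (G : Type*) [Group G] [MetricSpace G] [IsTopologicalGroup G]
    [PolishSpace G]
    (hleft : ∀ g h k : G, dist (g * h) (g * k) = dist h k)
    (hright : ∀ g h k : G, dist (h * g) (k * g) = dist h k)
    (x y : ℕ → G)
    (h : ∃ l : G, Tendsto (fun n => partialProd x n * (partialProd y n)⁻¹) atTop (𝓝 l)) :
    Tendsto (fun n => dist (x n) (y n)) atTop (𝓝 0) :=
  stmt_3_general G hleft hright x y h
end

section
/- A locally compact Polish group G is strongly NSS if and only if it is NSS. -/
/-!
Let `W` be an NSS neighbourhood of `1` and `C ⊆ W` a compact neighbourhood of `1`. If `interior C`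
were not unenclosed, some sequence `g` not converging to `1` would have all its ordered
subproducts in `C`. The points that are limits of subproducts with arbitrarily late indices then
form a compact subsemigroup of `W`, hence a subgroup, hence `{1}`; but this set contains every
cluster point of `g`, and one of those differs from `1`. Conversely, a nontrivial subgroup inside
`V` yields a constant sequence all of whose subproducts, being powers, stay in `V`.
-/

open Filter Topology

/-- `V` is an unenclosed set of `G`. -/
def Unenclosed (G : Type*) [Group G] [TopologicalSpace G] (V : Set G) : Prop :=
  IsOpen V ∧ (1 : G) ∈ V ∧
    ∀ g : ℕ → G, ¬ Tendsto g atTop (𝓝 1) →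
      ∃ (k : ℕ) (n : Fin (k + 1) → ℕ), StrictMono n ∧ (List.ofFn (g ∘ n)).prod ∉ V

/-- `G` is strongly NSS if it has an unenclosed set. -/
def StronglyNSS (G : Type*) [Group G] [TopologicalSpace G] : Prop :=
  ∃ V : Set G, Unenclosed G V

/-- `G` is NSS: some open neighborhood of the identity contains no non-trivial subgroup. -/
def NSS (G : Type*) [Group G] [TopologicalSpace G] : Prop :=
  ∃ V : Set G, IsOpen V ∧ (1 : G) ∈ V ∧ ∀ K : Subgroup G, (K : Set G) ⊆ V → K = ⊥

section CompactSemigroup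

variable {G : Type*} [Group G] [TopologicalSpace G] [IsTopologicalGroup G] [T2Space G]

/- The idempotent of the compact semigroup `closure {a ^ (n + 2)}` is `1`, so `a⁻¹ = a⁻¹ * 1` is
a limit of the powers `a ^ (n + 1) ∈ S`. -/
theorem inv_mem_of_isCompact_of_mul_mem {S : Set G} (hS : IsCompact S)
    (hmul : ∀ x ∈ S, ∀ y ∈ S, x * y ∈ S) {a : G} (ha : a ∈ S) : a⁻¹ ∈ S := by
  have hpow : ∀ n : ℕ, a ^ (n + 1) ∈ S := by
    intro n
    induction n with
    | zero => simpa using ha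
    | succ n ih => rw [pow_succ]; exact hmul _ ih _ ha
  set T := closure (Set.range fun n : ℕ => a ^ (n + 2))
  have hTS : T ⊆ S := closure_minimal (Set.range_subset_iff.2 fun n => hpow (n + 1)) hS.isClosed
  have hTmul : ∀ x ∈ T, ∀ y ∈ T, x * y ∈ T := by
    intro x hx y hy
    refine map_mem_closure₂ continuous_mul hx hy ?_
    rintro _ ⟨n, rfl⟩ _ ⟨m, rfl⟩
    exact ⟨n + m + 2, by rw [← pow_add]; ring_nf⟩
  obtain ⟨e, heT, hee⟩ := exists_idempotent_in_compact_subsemigroup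
    continuous_mul_const T ⟨a ^ 2, subset_closure ⟨0, rfl⟩⟩
    (hS.of_isClosed_subset isClosed_closure hTS) hTmul
  obtain rfl : e = 1 := mul_eq_left.mp hee
  have hshift : Set.MapsTo (a⁻¹ * ·) (Set.range fun n : ℕ => a ^ (n + 2)) S := by
    rintro _ ⟨n, rfl⟩
    simpa [pow_succ'] using hpow n
  simpa using closure_minimal hshift.image_subset hS.isClosed
    (map_mem_closure (continuous_const_mul a⁻¹) heT (Set.mapsTo_image _ _))

theorem exists_subgroup_coe_eq_of_isCompact {S : Set G} (hS : IsCompact S) (hne : S.Nonempty)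
    (hmul : ∀ x ∈ S, ∀ y ∈ S, x * y ∈ S) : ∃ K : Subgroup G, (K : Set G) = S := by
  obtain ⟨a, ha⟩ := hne
  have hinv : ∀ x ∈ S, x⁻¹ ∈ S := fun x hx => inv_mem_of_isCompact_of_mul_mem hS hmul hx
  refine ⟨{ carrier := S
            one_mem' := by simpa using hmul _ ha _ (hinv a ha)
            mul_mem' := fun hx hy => hmul _ hx _ hy
            inv_mem' := fun hx => hinv _ hx }, rfl⟩

end CompactSemigroup

theorem mul_mem_iInter_closure {M ι : Type*} [Mul M] [TopologicalSpace M] [ContinuousMul M]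
    {P : ι → Set M} (hP : ∀ i, ∀ x ∈ P i, ∃ j, ∀ y ∈ P j, x * y ∈ P i) {x y : M}
    (hx : x ∈ ⋂ i, closure (P i)) (hy : y ∈ ⋂ i, closure (P i)) :
    x * y ∈ ⋂ i, closure (P i) := by
  refine Set.mem_iInter.2 fun i => ?_
  have hright : Set.MapsTo (· * y) (P i) (closure (P i)) := fun p hp => by
    obtain ⟨j, hj⟩ := hP i p hp
    exact map_mem_closure (continuous_const_mul p) (Set.mem_iInter.1 hy j) hj
  simpa using map_mem_closure (continuous_mul_const y) (Set.mem_iInter.1 hx i) hright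

section TailSubproducts

variable {M : Type*} [Monoid M]

/-- The products `g i₁ * ⋯ * g iₖ` with `k ≥ 1` and `m ≤ i₁ < ⋯ < iₖ`. -/
def tailSubproducts (g : ℕ → M) (m : ℕ) : Set M :=
  {x | ∃ l : List ℕ, l ≠ [] ∧ l.Pairwise (· < ·) ∧ (∀ i ∈ l, m ≤ i) ∧ (l.map g).prod = x}

theorem apply_mem_tailSubproducts (g : ℕ → M) {m n : ℕ} (h : m ≤ n) :
    g n ∈ tailSubproducts g m :=
  ⟨[n], by simp, by simp, by simpa using h, by simp⟩

theorem exists_mul_mem_tailSubproducts {g : ℕ → M} {m : ℕ} {x : M}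
    (hx : x ∈ tailSubproducts g m) :
    ∃ N, ∀ y ∈ tailSubproducts g N, x * y ∈ tailSubproducts g m := by
  obtain ⟨l, hl, hlsorted, hlm, rfl⟩ := hx
  refine ⟨l.sum + 1, ?_⟩
  rintro _ ⟨l', -, hl'sorted, hl'N, rfl⟩
  have hlt : ∀ i ∈ l, ∀ j ∈ l', i < j := fun i hi j hj =>
    (List.le_sum_of_mem hi).trans_lt (hl'N j hj)
  refine ⟨l ++ l', by simp [hl], List.pairwise_append.2 ⟨hlsorted, hl'sorted, hlt⟩, ?_,
    by simp⟩
  obtain ⟨i₀, hi₀⟩ := List.exists_mem_of_ne_nil l hl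
  simp only [List.mem_append]
  rintro i (hi | hi)
  exacts [hlm i hi, ((hlm i₀ hi₀).trans (hlt i₀ hi₀ i hi).le)]

theorem exists_strictMono_prod_eq_of_mem_tailSubproducts {g : ℕ → M} {m : ℕ} {x : M}
    (hx : x ∈ tailSubproducts g m) :
    ∃ (k : ℕ) (n : Fin (k + 1) → ℕ), StrictMono n ∧ (List.ofFn (g ∘ n)).prod = x := by
  obtain ⟨l, hl, hlsorted, -, rfl⟩ := hx
  obtain ⟨a, t, rfl⟩ := List.exists_cons_of_ne_nil hl
  refine ⟨t.length, (a :: t).get, fun i j hij => List.pairwise_iff_get.1 hlsorted i j hij, ?_⟩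
  rw [← List.map_ofFn, List.ofFn_get]

theorem MapClusterPt.mem_iInter_closure_tailSubproducts [TopologicalSpace M] {g : ℕ → M}
    {x : M} (hx : MapClusterPt x atTop g) : x ∈ ⋂ m, closure (tailSubproducts g m) :=
  Set.mem_iInter.2 fun m => closure_mono
    ((Set.image_subset_iff (t := tailSubproducts g m)).2 fun _ hn => apply_mem_tailSubproducts g hn)
    (mapClusterPt_atTop_iff_forall_mem_closure.1 hx m)

end TailSubproducts

theorem StronglyNSS.nss {G : Type*} [Group G] [TopologicalSpace G] [T1Space G]
    (h : StronglyNSS G) : NSS G := by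
  obtain ⟨V, hVo, hV1, hV⟩ := h
  refine ⟨V, hVo, hV1, fun K hK => (Subgroup.eq_bot_iff_forall K).2 fun a haK => ?_⟩
  by_contra ha1
  obtain ⟨k, n, -, hprod⟩ := hV (fun _ => a) (by rwa [tendsto_const_nhds_iff])
  refine hprod (hK ?_)
  rw [Function.comp_def, List.ofFn_const, List.prod_replicate]
  exact pow_mem haK _

theorem NSS.stronglyNSS {G : Type*} [Group G] [TopologicalSpace G] [IsTopologicalGroup G]
    [T2Space G] [LocallyCompactSpace G] (h : NSS G) : StronglyNSS G := by
  obtain ⟨W, hWo, hW1, hW⟩ := h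
  obtain ⟨C, hC1, hCW, hC⟩ := local_compact_nhds (hWo.mem_nhds hW1)
  refine ⟨interior C, isOpen_interior, mem_interior_iff_mem_nhds.2 hC1, fun g hg => ?_⟩
  by_contra! hprod
  have hsub : ∀ m, tailSubproducts g m ⊆ C := fun m x hx => by
    obtain ⟨k, n, hn, rfl⟩ := exists_strictMono_prod_eq_of_mem_tailSubproducts hx
    exact interior_subset (hprod k n hn)
  obtain ⟨x, -, hx, hx1⟩ : ∃ x ∈ C, MapClusterPt x atTop g ∧ x ≠ 1 := by
    by_contra! h
    exact hg (hC.tendsto_nhds_of_unique_mapClusterPt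
      (.of_forall fun n => hsub n (apply_mem_tailSubproducts g le_rfl)) h)
  set A := ⋂ m, closure (tailSubproducts g m)
  have hAC : A ⊆ C := (Set.iInter_subset _ 0).trans (closure_minimal (hsub 0) hC.isClosed)
  have hxA : x ∈ A := hx.mem_iInter_closure_tailSubproducts
  obtain ⟨K, hK⟩ := exists_subgroup_coe_eq_of_isCompact
    (hC.of_isClosed_subset (isClosed_iInter fun _ => isClosed_closure) hAC) ⟨x, hxA⟩
    fun a ha b hb => mul_mem_iInter_closure (fun _ _ => exists_mul_mem_tailSubproducts) ha hb
  have hxK : x ∈ K := by rwa [← SetLike.mem_coe, hK]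
  rw [hW K (hK ▸ hAC.trans hCW), Subgroup.mem_bot] at hxK
  exact hx1 hxK

/-- A locally compact Polish group is strongly NSS iff it is NSS. -/
theorem stmt_5 (G : Type*) [Group G] [TopologicalSpace G] [IsTopologicalGroup G]
    [PolishSpace G] [LocallyCompactSpace G] :
    StronglyNSS G ↔ NSS G :=
  ⟨StronglyNSS.nss, NSS.stronglyNSS⟩
end

section
/- The Banach space c_0 of real sequences converging to 0, with the supremum norm, regarded as an additive topological group, is NSS but not strongly NSS. Specifically: (a) for every x ∈ c_0 with x ≠ 0, the norms ‖n·x‖ tend to +∞, so every open ball around 0 contains no non-trivial subgroup; (b) for every r > 0 the open ball {x : ‖x‖ < r} is not an unenclosed set, as witnessed by the sequence ((r/2)·e_n) of scaled canonical basis vectors. -/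
/-!
Part (a) holds in every real normed space, since `‖n • x‖ = n ‖x‖`; a subgroup inside a
ball is therefore trivial. For (b), the vectors `e n` have disjoint supports, so a sum of
`(r/2) • e n` over distinct indices still has sup norm `r/2 < r`, although each term has
norm `r/2` and the sequence does not tend to `0`.
-/

open Filter Topology ZeroAtInfty

/-- The canonical basis vector `e n` of `c₀ = C₀(ℕ, ℝ)`. -/
noncomputable def eVec (n : ℕ) : C₀(ℕ, ℝ) :=
  { toFun := fun m => if m = n then (1 : ℝ) else 0
    continuous_toFun := continuous_of_discreteTopology
    zero_at_infty' := by
      have h : (fun m : ℕ => if m = n then (1:ℝ) else 0) =ᶠ[Filter.cocompact ℕ] 0 := by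
        apply Filter.mem_of_superset (isCompact_singleton (x := n)).compl_mem_cocompact
        intro m hm
        simp only [Set.mem_compl_iff, Set.mem_singleton_iff] at hm
        simp [hm]
      rw [Filter.tendsto_congr' h]
      exact tendsto_const_nhds }

section NormedSpace

variable {E : Type*} [NormedAddCommGroup E] [NormedSpace ℝ E]

theorem tendsto_norm_nsmul_atTop {x : E} (hx : x ≠ 0) :
    Tendsto (fun n : ℕ => ‖n • x‖) atTop atTop := by
  simp only [RCLike.norm_nsmul ℝ, nsmul_eq_mul]
  exact tendsto_natCast_atTop_atTop.atTop_mul_const (norm_pos_iff.2 hx)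

theorem AddSubgroup.eq_bot_of_subset_norm_lt (K : AddSubgroup E) {r : ℝ}
    (hK : (K : Set E) ⊆ {x | ‖x‖ < r}) : K = ⊥ := by
  refine (AddSubgroup.eq_bot_iff_forall K).2 fun x hx => ?_
  by_contra hx0
  obtain ⟨n, hn⟩ := ((tendsto_norm_nsmul_atTop hx0).eventually_ge_atTop r).exists
  exact (hK (K.nsmul_mem hx n)).not_ge hn

end NormedSpace

namespace ZeroAtInftyContinuousMap

theorem coe_sum {α β ι : Type*} [TopologicalSpace α] [TopologicalSpace β] [AddCommMonoid β]
    [ContinuousAdd β] (s : Finset ι) (f : ι → C₀(α, β)) :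
    ⇑(∑ i ∈ s, f i) = ∑ i ∈ s, ⇑(f i) :=
  map_sum (⟨⟨(⇑), coe_zero⟩, coe_add⟩ : C₀(α, β) →+ (α → β)) f s

theorem norm_le {α β : Type*} [TopologicalSpace α] [SeminormedAddCommGroup β]
    (f : C₀(α, β)) {C : ℝ} (hC : 0 ≤ C) : ‖f‖ ≤ C ↔ ∀ x, ‖f x‖ ≤ C := by
  rw [← norm_toBCF_eq_norm]
  exact BoundedContinuousFunction.norm_le hC

end ZeroAtInftyContinuousMap

theorem norm_eVec (n : ℕ) : ‖eVec n‖ = 1 := by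
  refine le_antisymm ((ZeroAtInftyContinuousMap.norm_le _ zero_le_one).2 fun m => ?_) ?_
  · by_cases h : m = n <;> simp [eVec, h]
  · simpa [eVec] using (eVec n).toBCF.norm_coe_le_norm n

theorem norm_sum_eVec_le {ι : Type*} [Fintype ι] {n : ι → ℕ} (hn : n.Injective) :
    ‖∑ i, eVec (n i)‖ ≤ 1 := by
  classical
  refine (ZeroAtInftyContinuousMap.norm_le _ zero_le_one).2 fun m => ?_
  have hcard : (Finset.univ.filter fun i => m = n i).card ≤ 1 :=
    Finset.card_le_one.2 fun i hi j hj => hn <| by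
      simp only [Finset.mem_filter] at hi hj
      rw [← hi.2, ← hj.2]
  simpa [ZeroAtInftyContinuousMap.coe_sum, eVec, Finset.sum_boole] using hcard

/-- `c₀` is NSS but not strongly NSS: (a) for every `x ≠ 0` we have `‖n • x‖ → ∞`,
so every open ball around `0` contains no non-trivial subgroup; (b) for every `r > 0`
the ball `{x : ‖x‖ < r}` is not an unenclosed set, witnessed by `((r/2) • e n)`:
this sequence does not converge to `0`, yet each finite sum of its terms over
increasing indices stays in the ball. -/
theorem stmt_6 :
    (∀ x : C₀(ℕ, ℝ), x ≠ 0 → Tendsto (fun n : ℕ => ‖n • x‖) atTop atTop) ∧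
    (∀ r : ℝ, 0 < r → ∀ K : AddSubgroup C₀(ℕ, ℝ),
      (K : Set C₀(ℕ, ℝ)) ⊆ {x | ‖x‖ < r} → K = ⊥) ∧
    (∀ r : ℝ, 0 < r →
      ¬ Tendsto (fun n : ℕ => (r / 2) • eVec n) atTop (𝓝 0) ∧
      ∀ (k : ℕ) (n : Fin (k + 1) → ℕ), StrictMono n →
        ‖∑ i : Fin (k + 1), (r / 2) • eVec (n i)‖ < r) := by
  refine ⟨fun x => tendsto_norm_nsmul_atTop, fun r _ K => K.eq_bot_of_subset_norm_lt,
    fun r hr => ⟨fun h => ?_, fun k n hn => ?_⟩⟩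
  · have hnorm : Tendsto (fun _ : ℕ => r / 2) atTop (𝓝 0) := by
      simpa [norm_smul, norm_eVec, abs_of_pos hr] using h.norm
    linarith [tendsto_nhds_unique hnorm tendsto_const_nhds]
  · rw [← Finset.smul_sum, norm_smul, Real.norm_of_nonneg (by linarith)]
    nlinarith [norm_sum_eVec_le hn.injective]
end

section
/- Let X be a separable Banach space that is not strongly NSS. Then there exists a sequence (v_i) in X with lim_i v_i ≠ 0 such that for all j < k and all sign patterns θ ∈ {-1,1}^{[j,k]}, ‖θ(j)v_j + ··· + θ(k)v_k‖ < 2; moreover, for any such sequence and any (t_i) ∈ c_0, the series Σ_i t_i v_i converges in X. -/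
/-!
Since the unit ball is not unenclosed, some sequence `v` not tending to `0` has every finite
subseries sum `∑_{i ∈ S} v_i` in the unit ball, and a signed block sum is the difference of two
such sums. Conversely, the norm is convex, so the bound `2` on signed block sums extends from sign
vectors to all coefficient vectors in the cube `[-1, 1]^S`; this makes `∑ t_i v_i` Cauchy whenever
`t_i → 0`.
-/

open Filter Topology

/-- `V` is an unenclosed set of the additive group `X`. -/
def UnenclosedAdd (X : Type*) [AddGroup X] [TopologicalSpace X] (V : Set X) : Prop :=
  IsOpen V ∧ (0 : X) ∈ V ∧
    ∀ v : ℕ → X, ¬ Tendsto v atTop (𝓝 0) →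
      ∃ (k : ℕ) (n : Fin (k + 1) → ℕ), StrictMono n ∧ (List.ofFn (v ∘ n)).sum ∉ V

/-- An additive Polish group is strongly NSS if it has an unenclosed set. -/
def StronglyNSSAdd (X : Type*) [AddGroup X] [TopologicalSpace X] : Prop :=
  ∃ V : Set X, UnenclosedAdd X V

/-- The condition that all signed sums of consecutive blocks of `v` have norm `< 2`. -/
def SignedBlockBound {X : Type*} [NormedAddCommGroup X] [NormedSpace ℝ X] (v : ℕ → X) : Prop :=
  ∀ j k : ℕ, j < k → ∀ θ : ℕ → ℝ, (∀ i, θ i = 1 ∨ θ i = -1) →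
    ‖∑ i ∈ Finset.Icc j k, θ i • v i‖ < 2

open Finset

lemma exists_forall_finset_sum_mem_of_not_unenclosedAdd {X : Type*} [AddCommGroup X]
    [TopologicalSpace X] {V : Set X} (hV : IsOpen V) (h0 : (0 : X) ∈ V)
    (h : ¬ UnenclosedAdd X V) :
    ∃ v : ℕ → X, ¬ Tendsto v atTop (𝓝 0) ∧ ∀ S : Finset ℕ, ∑ i ∈ S, v i ∈ V := by
  simp only [UnenclosedAdd, hV, h0, true_and, not_forall, not_exists, not_and, not_not] at h
  obtain ⟨v, hv, hsum⟩ := h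
  refine ⟨v, hv, fun S => ?_⟩
  rcases S.eq_empty_or_nonempty with rfl | hS
  · simpa using h0
  obtain ⟨k, hk⟩ : ∃ k, S.card = k + 1 := Nat.exists_eq_add_one.2 hS.card_pos
  convert hsum k (S.orderEmbOfFin hk) (S.orderEmbOfFin hk).strictMono using 1
  rw [List.sum_ofFn]
  conv_lhs => rw [← S.map_orderEmbOfFin_univ hk, sum_map]
  rfl

section Normed

variable {X : Type*} [NormedAddCommGroup X] [NormedSpace ℝ X]

lemma signedBlockBound_of_forall_norm_sum_lt_one {v : ℕ → X}
    (h : ∀ S : Finset ℕ, ‖∑ i ∈ S, v i‖ < 1) : SignedBlockBound v := by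
  intro j k _ θ hθ
  set S := Icc j k
  have hsplit : ∑ i ∈ S, θ i • v i
      = ∑ i ∈ S.filter (θ · = 1), v i - ∑ i ∈ S.filter (θ · ≠ 1), v i := by
    rw [← sum_filter_add_sum_filter_not S (θ · = 1), sub_eq_add_neg, ← sum_neg_distrib]
    congr 1 <;> refine sum_congr rfl fun i hi => ?_ <;> have hθi := (mem_filter.1 hi).2
    · rw [hθi, one_smul]
    · rw [(hθ i).resolve_left hθi, neg_one_smul]
  rw [hsplit]
  linarith [norm_sub_le (∑ i ∈ S.filter (θ · = 1), v i) (∑ i ∈ S.filter (θ · ≠ 1), v i),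
    h (S.filter (θ · = 1)), h (S.filter (θ · ≠ 1))]

lemma norm_add_smul_le_max (x u : X) {a : ℝ} (ha : |a| ≤ 1) :
    ‖x + a • u‖ ≤ max ‖x + u‖ ‖x - u‖ := by
  obtain ⟨ha₁, ha₂⟩ := abs_le.1 ha
  have hcombo : x + a • u = ((1 + a) / 2) • (x + u) + ((1 - a) / 2) • (x - u) := by module
  calc ‖x + a • u‖ ≤ (1 + a) / 2 * ‖x + u‖ + (1 - a) / 2 * ‖x - u‖ := by
        rw [hcombo]
        refine (norm_add_le _ _).trans_eq ?_
        rw [norm_smul, norm_smul, Real.norm_of_nonneg (by linarith),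
          Real.norm_of_nonneg (by linarith)]
    _ ≤ max ‖x + u‖ ‖x - u‖ := by
        simpa only [smul_eq_mul] using
          Convex.combo_le_max (a := (1 + a) / 2) (b := (1 - a) / 2) ‖x + u‖ ‖x - u‖
            (by linarith) (by linarith) (by ring)

lemma norm_add_sum_smul_le_of_forall_sign {ι : Type*} (v : ι → X) (S : Finset ι) (w : X)
    {M : ℝ} (hM : ∀ θ : ι → ℝ, (∀ i, θ i = 1 ∨ θ i = -1) → ‖w + ∑ i ∈ S, θ i • v i‖ ≤ M)
    {a : ι → ℝ} (ha : ∀ i ∈ S, |a i| ≤ 1) : ‖w + ∑ i ∈ S, a i • v i‖ ≤ M := by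
  classical
  induction S using Finset.induction_on generalizing w with
  | empty => simpa using hM (fun _ => 1) (fun _ => Or.inl rfl)
  | @insert j S hj ih =>
    have hvertex : ∀ s : ℝ, (s = 1 ∨ s = -1) → ‖(w + s • v j) + ∑ i ∈ S, a i • v i‖ ≤ M := by
      refine fun s hs => ih _ (fun θ hθ => ?_) fun i hi => ha i (mem_insert_of_mem hi)
      have hθ' : ∀ i, Function.update θ j s i = 1 ∨ Function.update θ j s i = -1 := by
        intro i
        rcases eq_or_ne i j with rfl | hij
        · simpa using hs
        · simpa [hij] using hθ i
      have hrest : ∑ i ∈ S, Function.update θ j s i • v i = ∑ i ∈ S, θ i • v i :=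
        sum_congr rfl fun i hi => by rw [Function.update_of_ne (ne_of_mem_of_not_mem hi hj)]
      simpa [sum_insert hj, hrest, add_assoc] using hM _ hθ'
    have hplus := hvertex 1 (Or.inl rfl)
    have hminus := hvertex (-1) (Or.inr rfl)
    rw [one_smul, add_right_comm] at hplus
    rw [neg_one_smul, ← sub_eq_add_neg, sub_add_eq_add_sub] at hminus
    rw [sum_insert hj, ← add_assoc, add_right_comm]
    exact (norm_add_smul_le_max _ _ (ha j (mem_insert_self j S))).trans (max_le hplus hminus)

namespace SignedBlockBound

variable {v : ℕ → X}

lemma norm_sum_smul_le (hv : SignedBlockBound v) (T : Finset ℕ) {a : ℕ → ℝ} {c : ℝ}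
    (hc : 0 < c) (ha : ∀ i ∈ T, |a i| ≤ c) : ‖∑ i ∈ T, a i • v i‖ ≤ 2 * c := by
  classical
  -- The `+ 1` keeps the block `[0, k]` nondegenerate: `SignedBlockBound` only bounds `j < k`.
  set k := T.sup id + 1
  have hT : T ⊆ Icc 0 k := fun i hi =>
    mem_Icc.2 ⟨i.zero_le, (le_sup (f := id) hi).trans (Nat.le_succ _)⟩
  have hext : ∑ i ∈ T, a i • v i
      = c • ∑ i ∈ Icc 0 k, (if i ∈ T then a i / c else 0) • v i := by
    rw [smul_sum]
    simp only [ite_smul, zero_smul, smul_ite, smul_zero, sum_ite_mem, inter_eq_right.2 hT,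
      smul_smul, mul_div_cancel₀ _ hc.ne']
  have hunit : ‖0 + ∑ i ∈ Icc 0 k, (if i ∈ T then a i / c else 0) • v i‖ ≤ 2 := by
    refine norm_add_sum_smul_le_of_forall_sign v _ 0
      (fun θ hθ => by simpa using (hv 0 k (Nat.succ_pos _) θ hθ).le) fun i _ => ?_
    split_ifs with hi
    · rw [abs_div, abs_of_pos hc, div_le_one hc]
      exact ha i hi
    · simp
  rw [zero_add] at hunit
  rw [hext, norm_smul, Real.norm_of_nonneg hc.le, mul_comm]
  exact mul_le_mul_of_nonneg_right hunit hc.le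

lemma summable_smul [CompleteSpace X] (hv : SignedBlockBound v) {t : ℕ → ℝ}
    (ht : Tendsto t atTop (𝓝 0)) : Summable fun i => t i • v i := by
  refine summable_iff_vanishing_norm.2 fun ε hε => ?_
  obtain ⟨N, hN⟩ := Metric.tendsto_atTop.1 ht (ε / 4) (by positivity)
  refine ⟨range N, fun T hT => ?_⟩
  have hsmall : ∀ i ∈ T, |t i| ≤ ε / 4 := fun i hi => by
    have hNi : N ≤ i := by simpa using disjoint_left.1 hT hi
    simpa [Real.dist_eq] using (hN i hNi).le
  linarith [hv.norm_sum_smul_le T (by positivity) hsmall]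

end SignedBlockBound

end Normed

theorem stmt_8_general (X : Type*) [NormedAddCommGroup X] [NormedSpace ℝ X] [CompleteSpace X]
    (hX : ¬ StronglyNSSAdd X) :
    (∃ v : ℕ → X, ¬ Tendsto v atTop (𝓝 0) ∧ SignedBlockBound v) ∧
    (∀ v : ℕ → X, ¬ Tendsto v atTop (𝓝 0) → SignedBlockBound v →
      ∀ t : ℕ → ℝ, Tendsto t atTop (𝓝 0) →
        ∃ l : X, Tendsto (fun n => ∑ i ∈ Finset.range (n + 1), t i • v i) atTop (𝓝 l)) := by
  refine ⟨?_, fun v _ hv t ht => ?_⟩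
  · obtain ⟨v, hv, hball⟩ := exists_forall_finset_sum_mem_of_not_unenclosedAdd
      Metric.isOpen_ball (Metric.mem_ball_self one_pos) fun h => hX ⟨_, h⟩
    exact ⟨v, hv, signedBlockBound_of_forall_norm_sum_lt_one fun S => mem_ball_zero_iff.1 (hball S)⟩
  · obtain ⟨l, hl⟩ := hv.summable_smul ht
    exact ⟨l, hl.tendsto_sum_nat.comp (tendsto_add_atTop_nat 1)⟩

/-- If a separable Banach space `X` is not strongly NSS, then there is a sequence `(v_i)`
not converging to `0` such that every signed sum of a block of `(v_i)` has norm `< 2`;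
moreover, for any such sequence and any null sequence `(t_i)`, the series `∑ t_i v_i`
converges in `X`. -/
theorem stmt_8 (X : Type*) [NormedAddCommGroup X] [NormedSpace ℝ X] [CompleteSpace X]
    [TopologicalSpace.SeparableSpace X] (hX : ¬ StronglyNSSAdd X) :
    (∃ v : ℕ → X, ¬ Tendsto v atTop (𝓝 0) ∧ SignedBlockBound v) ∧
    (∀ v : ℕ → X, ¬ Tendsto v atTop (𝓝 0) → SignedBlockBound v →
      ∀ t : ℕ → ℝ, Tendsto t atTop (𝓝 0) →
        ∃ l : X, Tendsto (fun n => ∑ i ∈ Finset.range (n + 1), t i • v i) atTop (𝓝 l)) :=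
  stmt_8_general X hX
end

section
/- Let G, H be Polish groups and φ : G → H a continuous homomorphism such that for every sequence x ∈ G^ω with lim_p x(p) = 1_G, the partial products (x(0)···x(p))_p are ι-Cauchy in G if and only if the partial products (φ(x(0))···φ(x(p)))_p are ι-Cauchy in H. Then the kernel ker(φ) is non-archimedean. -/
open Filter Topology

/-- A sequence is ι-Cauchy if it is Cauchy for some compatible left-invariant metric. -/
def IotaCauchy {G : Type*} [Group G] [t : TopologicalSpace G] (u : ℕ → G) : Prop :=
  ∃ m : MetricSpace G, m.toUniformSpace.toTopologicalSpace = t ∧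
    (∀ g h k : G, @dist G m.toDist (g * h) (g * k) = @dist G m.toDist h k) ∧
    @CauchySeq G ℕ m.toUniformSpace _ u

/-- A topological group is non-archimedean if it has a neighborhood basis of the identity
consisting of open subgroups. -/
def NonArchimedeanGroup (G : Type*) [Group G] [TopologicalSpace G] : Prop :=
  ∀ U ∈ 𝓝 (1 : G), ∃ K : Subgroup G, IsOpen (K : Set G) ∧ (K : Set G) ⊆ U

section Aux

open Set
open scoped NNReal

theorem exists_leftInvariant_metric (G : Type*) [Group G] [ts : TopologicalSpace G]
    [IsTopologicalGroup G] [FirstCountableTopology G] [T1Space G] :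
    ∃ m : MetricSpace G, m.toUniformSpace.toTopologicalSpace = ts ∧
      (∀ g h k : G, @dist G m.toDist (g * h) (g * k) = @dist G m.toDist h k) := by
  classical
  obtain ⟨W, hW⟩ := (𝓝 (1 : G)).exists_antitone_basis
  have hWmem : ∀ n, W n ∈ 𝓝 (1 : G) := fun n => hW.mem n
  have key : ∀ A : Set G, ∃ B : Set G, A ∈ 𝓝 (1 : G) →
      B ∈ 𝓝 (1 : G) ∧ (∀ a ∈ B, a⁻¹ ∈ B) ∧ (∀ a ∈ B, ∀ b ∈ B, ∀ c ∈ B, a * b * c ∈ A) := by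
    intro A
    by_cases hA : A ∈ 𝓝 (1 : G)
    · obtain ⟨V1, hV1, h1⟩ := exists_nhds_one_split hA
      obtain ⟨V2, hV2, h2⟩ := exists_nhds_one_split hV1
      have hV3 : V1 ∩ V2 ∈ 𝓝 (1 : G) := inter_mem hV1 hV2
      have hV4 : (fun a : G => a⁻¹) ⁻¹' (V1 ∩ V2) ∈ 𝓝 (1 : G) := by
        have h := continuous_inv.tendsto (1 : G)
        rw [inv_one] at h
        exact h hV3
      refine ⟨(V1 ∩ V2) ∩ (fun a : G => a⁻¹) ⁻¹' (V1 ∩ V2), fun _ =>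
        ⟨inter_mem hV3 hV4, ?_, ?_⟩⟩
      · rintro a ⟨h₁, h₂⟩
        exact ⟨h₂, by simpa using h₁⟩
      · rintro a ⟨ha, -⟩ b ⟨hb, -⟩ c ⟨hc, -⟩
        exact h1 _ (h2 _ ha.2 _ hb.2) _ hc.1
    · exact ⟨∅, fun h => absurd h hA⟩
  choose f hf using key
  set V : ℕ → Set G := fun n => Nat.rec (f (W 0)) (fun n Vn => f (Vn ∩ W (n + 1))) n with hVdef
  have hV0 : V 0 = f (W 0) := rfl
  have hVs : ∀ n, V (n + 1) = f (V n ∩ W (n + 1)) := fun n => rfl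
  have hVmem : ∀ n, V n ∈ 𝓝 (1 : G) := by
    intro n
    induction n with
    | zero => exact (hf (W 0) (hWmem 0)).1
    | succ n ih => exact (hf _ (inter_mem ih (hWmem (n + 1)))).1
  have h1V : ∀ n, (1 : G) ∈ V n := fun n => mem_of_mem_nhds (hVmem n)
  have hVsym : ∀ n, ∀ a ∈ V n, a⁻¹ ∈ V n := by
    intro n
    cases n with
    | zero => exact (hf (W 0) (hWmem 0)).2.1
    | succ n => exact (hf _ (inter_mem (hVmem n) (hWmem (n + 1)))).2.1
  have hV3 : ∀ n, ∀ a ∈ V (n + 1), ∀ b ∈ V (n + 1), ∀ c ∈ V (n + 1), a * b * c ∈ V n :=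
    fun n a ha b hb c hc =>
      (((hf _ (inter_mem (hVmem n) (hWmem (n + 1)))).2.2) a ha b hb c hc).1
  have hVW : ∀ n, V n ⊆ W n := by
    intro n
    cases n with
    | zero =>
      intro a ha
      have := (hf (W 0) (hWmem 0)).2.2 a ha 1 (h1V 0) 1 (h1V 0)
      simpa using this
    | succ n =>
      intro a ha
      have := (hf _ (inter_mem (hVmem n) (hWmem (n + 1)))).2.2 a ha 1 (h1V (n + 1)) 1
        (h1V (n + 1))
      simpa using this.2
  have hVdec : ∀ n, V (n + 1) ⊆ V n := by
    intro n a ha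
    have := hV3 n a ha 1 (h1V (n + 1)) 1 (h1V (n + 1))
    simpa using this
  have hVanti : Antitone V := antitone_nat_of_succ_le hVdec
  have hVbasis : ∀ s ∈ 𝓝 (1 : G), ∃ n, V n ⊆ s := by
    intro s hs
    obtain ⟨n, -, hn⟩ := hW.toHasBasis.mem_iff.1 hs
    exact ⟨n, (hVW n).trans hn⟩
  have hVint : ∀ g : G, (∀ n, g ∈ V n) → g = 1 := by
    intro g hg
    by_contra hne
    obtain ⟨n, hn⟩ := hVbasis {g}ᶜ (compl_singleton_mem_nhds fun h => hne h.symm)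
    exact hn (hg n) rfl
  -- the pre-norm
  set ν : G → ℝ≥0 := fun g =>
    if ∀ n, g ∈ V n then 0 else (2 : ℝ≥0)⁻¹ ^ sInf {n | g ∉ V n} with hνdef
  have νone : ν 1 = 0 := if_pos h1V
  have νsymm : ∀ g, ν g⁻¹ = ν g := by
    intro g
    have hiff : ∀ n, (g⁻¹ ∈ V n ↔ g ∈ V n) :=
      fun n => ⟨fun h => by simpa using hVsym n _ h, fun h => hVsym n _ h⟩
    simp only [hνdef, hiff]
  have νpow : ∀ g, ¬ (∀ n, g ∈ V n) →
      ∃ m, ν g = (2 : ℝ≥0)⁻¹ ^ m ∧ g ∉ V m ∧ ∀ k < m, g ∈ V k := by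
    intro g hg
    refine ⟨sInf {n | g ∉ V n}, if_neg hg, ?_, ?_⟩
    · exact Nat.sInf_mem (not_forall.1 hg)
    · intro k hk
      by_contra hkk
      exact absurd (Nat.sInf_le hkk) (not_le.2 hk)
  have νle : ∀ g n, g ∈ V n → ν g ≤ (2 : ℝ≥0)⁻¹ ^ (n + 1) := by
    intro g n hgn
    by_cases hg : ∀ k, g ∈ V k
    · rw [hνdef]; simp [hg]
    · obtain ⟨m, hm, hnot, hall⟩ := νpow g hg
      rw [hm]
      have hle : n + 1 ≤ m := by
        by_contra hc
        exact hnot (hVanti (by omega) hgn)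
      exact pow_le_pow_of_le_one zero_le (by norm_num) hle
  have νlt : ∀ g n, ν g < (2 : ℝ≥0)⁻¹ ^ n → g ∈ V n := by
    intro g n hlt
    by_cases hg : ∀ k, g ∈ V k
    · exact hg n
    · obtain ⟨m, hm, hnot, hall⟩ := νpow g hg
      rw [hm] at hlt
      have : n < m := by
        have h2 : (0:ℝ≥0) < 2⁻¹ := by norm_num
        exact (pow_lt_pow_iff_right_of_lt_one₀ h2 (inv_lt_one_of_one_lt₀ one_lt_two)).1 hlt
      exact hall n this
  have νzero : ∀ g, ν g = 0 → g = 1 := by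
    intro g hg
    by_cases hall : ∀ k, g ∈ V k
    · exact hVint g hall
    · obtain ⟨m, hm, -, -⟩ := νpow g hall
      rw [hm] at hg
      exact absurd hg (pow_ne_zero _ (by norm_num))
  have νone_le : ∀ g, ν g ≤ 1 := by
    intro g
    by_cases hall : ∀ k, g ∈ V k
    · rw [hνdef]; simp [hall]
    · obtain ⟨m, hm, -, -⟩ := νpow g hall
      rw [hm]
      exact pow_le_one₀ zero_le (by norm_num)
  have νtriple : ∀ k, ∀ a ∈ V k, ∀ b ∈ V k, ∀ c ∈ V k, ν (a * b * c) ≤ (2 : ℝ≥0)⁻¹ ^ k := by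
    intro k
    cases k with
    | zero => intro a _ b _ c _; simpa using νone_le (a * b * c)
    | succ k => intro a ha b hb c hc; exact νle _ _ (hV3 k a ha b hb c hc)
  have chain : ∀ a b c : G, ν (a * b * c) ≤ 2 * max (ν a) (max (ν b) (ν c)) := by
    intro a b c
    set M := max (ν a) (max (ν b) (ν c)) with hM
    have hda : ν a ≤ M := le_max_left _ _
    have hdb : ν b ≤ M := le_trans (le_max_left _ _) (le_max_right _ _)
    have hdc : ν c ≤ M := le_trans (le_max_right _ _) (le_max_right _ _)
    by_cases hM0 : M = 0
    · have ha : a = 1 := νzero a (le_antisymm (hM0 ▸ hda) zero_le)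
      have hb : b = 1 := νzero b (le_antisymm (hM0 ▸ hdb) zero_le)
      have hc : c = 1 := νzero c (le_antisymm (hM0 ▸ hdc) zero_le)
      simp [ha, hb, hc, νone]
    · have hMform : ∃ m, M = (2 : ℝ≥0)⁻¹ ^ m := by
        have hone : M = ν a ∨ M = ν b ∨ M = ν c := by
          rcases max_choice (ν a) (max (ν b) (ν c)) with h | h
          · exact Or.inl h
          · rcases max_choice (ν b) (ν c) with h' | h'
            · exact Or.inr (Or.inl (h.trans h'))
            · exact Or.inr (Or.inr (h.trans h'))
        have form : ∀ g : G, ν g ≠ 0 → ∃ m, ν g = (2 : ℝ≥0)⁻¹ ^ m := by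
          intro g hg
          by_cases hall : ∀ k, g ∈ V k
          · exact absurd (if_pos hall) hg
          · obtain ⟨m, hm, -, -⟩ := νpow g hall
            exact ⟨m, hm⟩
        rcases hone with h | h | h
        · obtain ⟨m, hm⟩ := form a (h ▸ hM0); exact ⟨m, h.trans hm⟩
        · obtain ⟨m, hm⟩ := form b (h ▸ hM0); exact ⟨m, h.trans hm⟩
        · obtain ⟨m, hm⟩ := form c (h ▸ hM0); exact ⟨m, h.trans hm⟩
      obtain ⟨m, hm⟩ := hMform
      cases m with
      | zero =>
        calc ν (a * b * c) ≤ 1 := νone_le _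
        _ ≤ 2 * M := by rw [hm]; norm_num
      | succ k =>
        have hVk : ∀ g : G, ν g ≤ M → g ∈ V k := by
          intro g hg
          refine νlt g k (lt_of_le_of_lt (hg.trans hm.le) ?_)
          exact pow_lt_pow_right_of_lt_one₀ (by norm_num) (inv_lt_one_of_one_lt₀ one_lt_two) (by omega)
        have := νtriple k a (hVk a hda) b (hVk b hdb) c (hVk c hdc)
        calc ν (a * b * c) ≤ (2 : ℝ≥0)⁻¹ ^ k := this
        _ = 2 * (2 : ℝ≥0)⁻¹ ^ (k + 1) := by
            rw [pow_succ']
            rw [← mul_assoc]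
            norm_num
        _ = 2 * M := by rw [hm]
  -- the pre-distance
  set d : G → G → ℝ≥0 := fun x y => ν (x⁻¹ * y) with hddef
  have hdself : ∀ x, d x x = 0 := by intro x; simp [hddef, νone]
  have hdcomm : ∀ x y, d x y = d y x := by
    intro x y
    have : y⁻¹ * x = (x⁻¹ * y)⁻¹ := by group
    simp only [hddef, this, νsymm]
  set pm : PseudoMetricSpace G := PseudoMetricSpace.ofPreNNDist d hdself hdcomm with hpmdef
  have hchain4 : ∀ x₁ x₂ x₃ x₄ : G, d x₁ x₄ ≤ 2 * (d x₁ x₂ ⊔ (d x₂ x₃ ⊔ d x₃ x₄)) := by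
    intro x₁ x₂ x₃ x₄
    have hx : x₁⁻¹ * x₄ = (x₁⁻¹ * x₂) * (x₂⁻¹ * x₃) * (x₃⁻¹ * x₄) := by group
    simpa only [hddef, hx] using chain (x₁⁻¹ * x₂) (x₂⁻¹ * x₃) (x₃⁻¹ * x₄)
  have hle : ∀ x y : G, @dist G pm.toDist x y ≤ (d x y : ℝ) :=
    PseudoMetricSpace.dist_ofPreNNDist_le d hdself hdcomm
  have hge : ∀ x y : G, (d x y : ℝ) ≤ 2 * @dist G pm.toDist x y :=
    PseudoMetricSpace.le_two_mul_dist_ofPreNNDist d hdself hdcomm hchain4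
  -- left invariance
  have hdinv : ∀ (g a b : G), d (g * a) (g * b) = d a b := by
    intro g a b
    have : (g * a)⁻¹ * (g * b) = a⁻¹ * b := by group
    simp only [hddef, this]
  have hmap : ∀ (g : G) (l₁ l₂ : List G),
      List.zipWith d (l₁.map (g * ·)) (l₂.map (g * ·)) = List.zipWith d l₁ l₂ := by
    intro g l₁ l₂
    rw [List.zipWith_map]
    congr 1
    funext a b
    exact hdinv g a b
  have hinv : ∀ g x y : G, @dist G pm.toDist (g * x) (g * y) = @dist G pm.toDist x y := by
    intro g x y
    rw [hpmdef, PseudoMetricSpace.dist_ofPreNNDist, PseudoMetricSpace.dist_ofPreNNDist]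
    rw [NNReal.coe_inj]
    have hsurj : Function.Surjective (List.map (g * ·) : List G → List G) := by
      intro l
      refine ⟨l.map (g⁻¹ * ·), ?_⟩
      rw [List.map_map]
      have : ((g * ·) ∘ (g⁻¹ * ·)) = id := by funext a; simp
      rw [this, List.map_id]
    refine (hsurj.iInf_congr _ fun l => ?_).symm
    have h1 : (g * x) :: l.map (g * ·) = (x :: l).map (g * ·) := rfl
    have h2 : l.map (g * ·) ++ [g * y] = (l ++ [y]).map (g * ·) := by
      rw [List.map_append]; rfl
    rw [h1, h2, hmap]
  -- identity of indiscernibles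
  have heq : ∀ x y : G, @dist G pm.toDist x y = 0 → x = y := by
    intro x y h0
    have h1 : (d x y : ℝ) ≤ 0 := by
      have := hge x y
      rw [h0] at this
      simpa using this
    have h2 : d x y = 0 := le_antisymm (by exact_mod_cast h1) zero_le
    have h3 : x⁻¹ * y = 1 := νzero _ h2
    rw [inv_mul_eq_one] at h3
    exact h3
  -- dist in terms of ν
  have hdist_eq : ∀ x y : G, @dist G pm.toDist x y = @dist G pm.toDist 1 (x⁻¹ * y) := by
    intro x y
    have := hinv x 1 (x⁻¹ * y)
    simpa using this
  -- topology identification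
  have htop : pm.toUniformSpace.toTopologicalSpace = ts := by
    refine TopologicalSpace.ext_iff.2 fun s => ⟨fun hs => ?_, fun hs => ?_⟩
    · -- metric open → ts open
      rw [isOpen_iff_mem_nhds]
      intro x hx
      obtain ⟨ε, hε, hball⟩ := (@Metric.isOpen_iff G pm s).1 hs x hx
      obtain ⟨n, hn⟩ := exists_pow_lt_of_lt_one (x := ε) (y := (2:ℝ)⁻¹) hε (by norm_num)
      have hTmem : (fun y => x⁻¹ * y) ⁻¹' (V n) ∈ 𝓝 x := by
        have hc : ContinuousAt (fun y : G => x⁻¹ * y) x :=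
          (continuous_const.mul continuous_id).continuousAt
        have hval : x⁻¹ * x = 1 := inv_mul_cancel x
        refine hc.preimage_mem_nhds ?_
        rw [hval]
        exact hVmem n
      refine Filter.mem_of_superset hTmem ?_
      intro y hy
      apply hball
      have hdy : @dist G pm.toDist y x < ε := by
        have h1 : @dist G pm.toDist x y ≤ ((ν (x⁻¹ * y) : ℝ≥0) : ℝ) := hle x y
        have h2 : ν (x⁻¹ * y) ≤ (2:ℝ≥0)⁻¹ ^ (n + 1) := νle _ _ hy
        have h3 : ((2:ℝ≥0)⁻¹ ^ (n + 1) : ℝ≥0) ≤ ((2:ℝ≥0)⁻¹ ^ n : ℝ≥0) :=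
          pow_le_pow_of_le_one zero_le (by norm_num) (by omega)
        have h4 : (((2:ℝ≥0)⁻¹ ^ n : ℝ≥0) : ℝ) = ((2:ℝ)⁻¹) ^ n := by push_cast; ring
        have h5 : @dist G pm.toDist x y < ε := by
          calc @dist G pm.toDist x y ≤ ((ν (x⁻¹ * y) : ℝ≥0) : ℝ) := h1
          _ ≤ (((2:ℝ≥0)⁻¹ ^ n : ℝ≥0) : ℝ) := by exact_mod_cast h2.trans h3
          _ = ((2:ℝ)⁻¹) ^ n := h4
          _ < ε := hn
        calc @dist G pm.toDist y x = @dist G pm.toDist x y := @dist_comm G pm y x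
        _ < ε := h5
      exact hdy
    · -- ts open → metric open
      rw [@Metric.isOpen_iff G pm]
      intro x hx
      have hpre : (fun y => x * y) ⁻¹' s ∈ 𝓝 (1 : G) := by
        have hc : ContinuousAt (fun y : G => x * y) 1 :=
          (continuous_const.mul continuous_id).continuousAt
        refine hc.preimage_mem_nhds ?_
        rw [mul_one]
        exact hs.mem_nhds hx
      obtain ⟨n, hn⟩ := hVbasis _ hpre
      refine ⟨((2:ℝ)⁻¹) ^ (n + 1), by positivity, ?_⟩
      intro y hy
      have hyd : @dist G pm.toDist y x < ((2:ℝ)⁻¹) ^ (n + 1) := hy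
      have hxy : @dist G pm.toDist x y < ((2:ℝ)⁻¹) ^ (n + 1) := by
        calc @dist G pm.toDist x y = @dist G pm.toDist y x := @dist_comm G pm x y
        _ < _ := hyd
      have hν : ν (x⁻¹ * y) < (2:ℝ≥0)⁻¹ ^ n := by
        have h1 : ((ν (x⁻¹ * y) : ℝ≥0) : ℝ) ≤ 2 * @dist G pm.toDist x y := hge x y
        have h2 : ((ν (x⁻¹ * y) : ℝ≥0) : ℝ) < 2 * ((2:ℝ)⁻¹) ^ (n + 1) := by
          calc ((ν (x⁻¹ * y) : ℝ≥0) : ℝ) ≤ 2 * @dist G pm.toDist x y := h1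
          _ < 2 * ((2:ℝ)⁻¹) ^ (n + 1) := by linarith
        have h3 : (2:ℝ) * ((2:ℝ)⁻¹) ^ (n + 1) = ((2:ℝ)⁻¹) ^ n := by
          rw [pow_succ']; ring
        rw [h3] at h2
        have h4 : (((2:ℝ≥0)⁻¹ ^ n : ℝ≥0) : ℝ) = ((2:ℝ)⁻¹) ^ n := by push_cast; ring
        rw [← h4] at h2
        exact_mod_cast h2
      have hmem : x⁻¹ * y ∈ V n := νlt _ _ hν
      have := hn hmem
      simpa using this
  -- assemble the metric space
  refine ⟨{ pm with eq_of_dist_eq_zero := fun {x y} h => heq x y h }, htop, fun g a b => hinv g a b⟩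

/-- An ι-Cauchy sequence is Cauchy for the left uniformity. -/
theorem iotaCauchy_left {G : Type*} [Group G] [ts : TopologicalSpace G] {u : ℕ → G}
    (hu : IotaCauchy u) : ∀ W ∈ 𝓝 (1 : G), ∃ N, ∀ p ≥ N, ∀ q ≥ N, (u p)⁻¹ * u q ∈ W := by
  obtain ⟨m, hcomp, hinv, hc⟩ := hu
  intro W hW
  have hW' : W ∈ @nhds G m.toUniformSpace.toTopologicalSpace 1 := by rw [hcomp]; exact hW
  obtain ⟨ε, hε, hball⟩ := (@Metric.mem_nhds_iff G m.toPseudoMetricSpace 1 W).1 hW'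
  obtain ⟨N, hN⟩ := (@Metric.cauchySeq_iff G ℕ m.toPseudoMetricSpace _ _ (u := u)).1 hc ε hε
  refine ⟨N, fun p hp q hq => ?_⟩
  apply hball
  have h1 : @dist G m.toDist (u p) (u q) < ε := hN p hp q hq
  have h2 : @dist G m.toDist ((u p)⁻¹ * u p) ((u p)⁻¹ * u q) =
      @dist G m.toDist (u p) (u q) := hinv (u p)⁻¹ (u p) (u q)
  rw [inv_mul_cancel] at h2
  have h3 : @dist G m.toDist 1 ((u p)⁻¹ * u q) < ε := by rw [h2]; exact h1
  have h4 : @dist G m.toDist ((u p)⁻¹ * u q) 1 < ε := by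
    rw [@dist_comm G m.toPseudoMetricSpace]; exact h3
  exact h4

end Aux

/-- If `φ : G → H` is a continuous homomorphism of Polish groups such that for every
sequence `x → 1_G` the partial products of `x` are ι-Cauchy iff the partial products of
`φ ∘ x` are ι-Cauchy, then `ker φ` is non-archimedean. -/
theorem stmt_9 (G H : Type*) [Group G] [TopologicalSpace G] [IsTopologicalGroup G]
    [PolishSpace G] [Group H] [TopologicalSpace H] [IsTopologicalGroup H] [PolishSpace H]
    (φ : G →* H) (hφ : Continuous φ)
    (h : ∀ x : ℕ → G, Tendsto x atTop (𝓝 1) →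
      (IotaCauchy (partialProd x) ↔ IotaCauchy (partialProd (fun p => φ (x p))))) :
    NonArchimedeanGroup ↥φ.ker := by
  classical
  intro U hU
  by_contra hcon
  push_neg at hcon
  -- extract a neighborhood of 1 in G whose trace on the kernel is inside U
  rw [show (1 : ↥φ.ker) = ⟨1, φ.ker.one_mem⟩ from rfl, nhds_subtype_eq_comap] at hU
  obtain ⟨W₀, hW₀, hW₀sub⟩ := Filter.mem_comap.1 hU
  have h1W₀ : (1 : G) ∈ W₀ := mem_of_mem_nhds hW₀
  -- an antitone neighborhood basis of 1 in G, symmetrized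
  obtain ⟨B, hB⟩ := (𝓝 (1 : G)).exists_antitone_basis
  set C : ℕ → Set G := fun n => B n ∩ (fun a : G => a⁻¹) ⁻¹' (B n) with hCdef
  have hCmem : ∀ n, C n ∈ 𝓝 (1 : G) := by
    intro n
    have hi : (fun a : G => a⁻¹) ⁻¹' (B n) ∈ 𝓝 (1 : G) := by
      have hc := continuous_inv.tendsto (1 : G)
      rw [inv_one] at hc
      exact hc (hB.mem n)
    exact Filter.inter_mem (hB.mem n) hi
  have hCsub : ∀ n, C n ⊆ B n := fun n => Set.inter_subset_left
  have hCsym : ∀ n, ∀ a ∈ C n, a⁻¹ ∈ C n := by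
    rintro n a ⟨h₁, h₂⟩
    exact ⟨h₂, by simpa using h₁⟩
  -- for each n, a word with letters in C n ∩ ker φ whose product escapes W₀
  have hword : ∀ n, ∃ l : List G, (∀ y ∈ l, y ∈ C n ∧ φ y = 1) ∧ l.prod ∉ W₀ := by
    intro n
    set S : Set ↥φ.ker := (Subtype.val : ↥φ.ker → G) ⁻¹' (C n) with hSdef
    have hS : S ∈ 𝓝 (1 : ↥φ.ker) := by
      have hv : Filter.Tendsto (Subtype.val : ↥φ.ker → G) (𝓝 1) (𝓝 1) :=
        continuous_subtype_val.tendsto (1 : ↥φ.ker)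
      exact hv (hCmem n)
    set L : Subgroup ↥φ.ker := Subgroup.closure S with hLdef
    have hLopen : IsOpen (L : Set ↥φ.ker) :=
      L.isOpen_of_mem_nhds (Filter.mem_of_superset hS Subgroup.subset_closure)
    obtain ⟨g, hgL, hgU⟩ := Set.not_subset.1 (hcon L hLopen)
    have hg' : g ∈ Submonoid.closure (S ∪ S⁻¹) := by
      rw [← Subgroup.closure_toSubmonoid]
      exact hgL
    obtain ⟨l, hl, hlprod⟩ := Submonoid.exists_list_of_mem_closure hg'
    refine ⟨l.map Subtype.val, ?_, ?_⟩
    · intro y hy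
      rw [List.mem_map] at hy
      obtain ⟨a, ha, rfl⟩ := hy
      have haC : (a : G) ∈ C n := by
        rcases hl a ha with h' | h'
        · exact h'
        · rw [Set.mem_inv] at h'
          have := hCsym n _ h'
          simpa using this
      exact ⟨haC, MonoidHom.mem_ker.1 a.2⟩
    · have hval : (l.map Subtype.val).prod = (g : G) := by
        rw [← hlprod]
        exact ((φ.ker.subtype).map_list_prod l).symm
      rw [hval]
      intro hmem
      exact hgU (hW₀sub hmem)
  choose word hwordmem hwordprod using hword
  have hwordne : ∀ n, word n ≠ [] := by
    intro n hn
    apply hwordprod n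
    rw [hn]
    simpa using h1W₀
  have hwlen : ∀ n, 1 ≤ (word n).length := fun n =>
    List.length_pos_iff.2 (hwordne n)
  -- blocks: word followed by its formal inverse
  set block : ℕ → List G := fun n => word n ++ ((word n).map (·⁻¹)).reverse with hblockdef
  have hblock_letters : ∀ n, ∀ y ∈ block n, y ∈ C n ∧ φ y = 1 := by
    intro n y hy
    rw [hblockdef, List.mem_append] at hy
    rcases hy with hy | hy
    · exact hwordmem n y hy
    · rw [List.mem_reverse, List.mem_map] at hy
      obtain ⟨a, ha, rfl⟩ := hy
      obtain ⟨haC, haφ⟩ := hwordmem n a ha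
      exact ⟨hCsym n a haC, by rw [map_inv, haφ, inv_one]⟩
  have hblock_prod : ∀ n, (block n).prod = 1 := by
    intro n
    rw [hblockdef]
    show ((word n) ++ ((word n).map (·⁻¹)).reverse).prod = 1
    rw [List.prod_append, ← List.prod_inv_reverse, mul_inv_cancel]
  have hblock_len : ∀ n, 1 ≤ (block n).length := by
    intro n
    rw [hblockdef]
    show 1 ≤ ((word n) ++ ((word n).map (·⁻¹)).reverse).length
    rw [List.length_append]
    have := hwlen n
    omega
  have htake_block : ∀ n, (block n).take (word n).length = word n := by
    intro n
    rw [hblockdef]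
    exact List.take_left
  -- the concatenated sequence
  set J : ℕ → List G := fun n => ((List.range n).map block).flatten with hJdef
  set off : ℕ → ℕ := fun n => (J n).length with hoffdef
  have hJ0 : J 0 = [] := rfl
  have hJsucc : ∀ n, J (n + 1) = J n ++ block n := by
    intro n
    rw [hJdef]
    show ((List.range (n+1)).map block).flatten = ((List.range n).map block).flatten ++ block n
    rw [List.range_succ, List.map_append, List.flatten_append]
    simp
  have hoffsucc : ∀ n, off (n + 1) = off n + (block n).length := by
    intro n
    rw [hoffdef]
    show (J (n+1)).length = (J n).length + (block n).length
    rw [hJsucc n, List.length_append]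
  have hoffmono : Monotone off := by
    apply monotone_nat_of_le_succ
    intro n
    rw [hoffsucc n]
    omega
  have hoffge : ∀ n, n ≤ off n := by
    intro n
    induction n with
    | zero => omega
    | succ n ih =>
      have := hblock_len n
      rw [hoffsucc n]
      omega
  have hJprod : ∀ n, (J n).prod = 1 := by
    intro n
    induction n with
    | zero => rfl
    | succ n ih => rw [hJsucc n, List.prod_append, ih, hblock_prod n, one_mul]
  have hJpre : ∀ m m', m ≤ m' → J m <+: J m' := by
    intro m m' hm
    induction m', hm using Nat.le_induction with
    | base => exact List.prefix_rfl
    | succ k hk ih =>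
      refine ih.trans ?_
      rw [hJsucc k]
      exact List.prefix_append _ _
  set x : ℕ → G := fun p => (J (p + 1)).getD p 1 with hxdef
  have hgetD_pre : ∀ (l₁ l₂ : List G) (p : ℕ), l₁ <+: l₂ → p < l₁.length →
      l₂.getD p 1 = l₁.getD p 1 := by
    rintro l₁ l₂ p ⟨t, rfl⟩ hp
    exact List.getD_append _ _ _ _ hp
  have hx_get : ∀ p m, p < off m → (J m).getD p 1 = x p := by
    intro p m hpm
    rcases le_total m (p + 1) with hle | hle
    · rw [hxdef]
      exact (hgetD_pre (J m) (J (p + 1)) p (hJpre _ _ hle) hpm).symm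
    · have hplen : p < off (p + 1) := lt_of_lt_of_le (Nat.lt_succ_self p) (hoffge (p + 1))
      rw [hxdef]
      exact hgetD_pre (J (p + 1)) (J m) p (hJpre _ _ hle) hplen
  have hblockindex : ∀ p, ∃ n, off n ≤ p ∧ p < off (n + 1) := by
    intro p
    have h0 : off 0 ≤ p := by rw [hoffdef]; show (J 0).length ≤ p; rw [hJ0]; simp
    have hnle : off (Nat.findGreatest (fun m => off m ≤ p) p) ≤ p :=
      Nat.findGreatest_spec (P := fun m => off m ≤ p) (n := p) (m := 0) (Nat.zero_le p) h0
    refine ⟨Nat.findGreatest (fun m => off m ≤ p) p, hnle, ?_⟩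
    by_contra hc
    push_neg at hc
    have hn1 : Nat.findGreatest (fun m => off m ≤ p) p + 1 ≤ p := le_trans (hoffge _) hc
    exact Nat.findGreatest_is_greatest (Nat.lt_succ_self _) hn1 hc
  have hx_block : ∀ n p, off n ≤ p → p < off (n + 1) → x p ∈ block n := by
    intro n p h1 h2
    rw [← hx_get p (n + 1) h2, hJsucc n]
    rw [List.getD_append_right _ _ _ _ h1]
    have hlt : p - (J n).length < (block n).length := by
      have h3 := hoffsucc n
      simp only [hoffdef] at h1 h2 h3
      omega
    rw [List.getD_eq_getElem _ _ hlt]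
    exact List.getElem_mem hlt
  -- letters are in the kernel and tend to 1
  have hker : ∀ p, φ (x p) = 1 := by
    intro p
    obtain ⟨n, h1, h2⟩ := hblockindex p
    exact (hblock_letters n _ (hx_block n p h1 h2)).2
  have htend : Tendsto x atTop (𝓝 (1 : G)) := by
    rw [tendsto_atTop']
    intro s hs
    obtain ⟨N, -, hN⟩ := hB.toHasBasis.mem_iff.1 hs
    refine ⟨off N, fun p hp => ?_⟩
    obtain ⟨n, h1, h2⟩ := hblockindex p
    have hnN : N ≤ n := by
      by_contra hc
      push_neg at hc
      have : off (n + 1) ≤ off N := hoffmono hc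
      omega
    have hxC : x p ∈ C n := (hblock_letters n _ (hx_block n p h1 h2)).1
    exact hN (hB.antitone hnN (hCsub n hxC))
  -- partial products as prefix products
  have hpp : ∀ p m, p < off m → partialProd x p = ((J m).take (p + 1)).prod := by
    intro p m hpm
    have hlists : (List.range (p + 1)).map x = (J m).take (p + 1) := by
      apply List.ext_getElem
      · rw [List.length_map, List.length_range, List.length_take]
        simp only [hoffdef] at hpm
        omega
      · intro i h₁ h₂
        rw [List.getElem_map, List.getElem_range, List.getElem_take]
        have hi : i < p + 1 := by simpa using h₁
        have hilen : i < (J m).length := by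
          simp only [hoffdef] at hpm; omega
        rw [← List.getD_eq_getElem (J m) 1 hilen]
        exact (hx_get i m (by simp only [hoffdef]; omega)).symm
    rw [partialProd, hlists]
  have hpp_end : ∀ n, partialProd x (off (n + 1) - 1) = 1 := by
    intro n
    have h1 : 1 ≤ off (n + 1) := le_trans (by omega) (hoffge (n + 1))
    have h2 : off (n + 1) - 1 < off (n + 1) := by omega
    rw [hpp _ _ h2]
    have h3 : off (n + 1) - 1 + 1 = off (n + 1) := by omega
    rw [h3, hoffdef]
    show ((J (n+1)).take (J (n+1)).length).prod = 1
    rw [List.take_length]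
    exact hJprod (n + 1)
  have hpp_mid : ∀ n, partialProd x (off n + (word n).length - 1) = (word n).prod := by
    intro n
    have hw := hwlen n
    have hblen : (word n).length < (block n).length := by
      rw [hblockdef]
      show (word n).length < ((word n) ++ ((word n).map (·⁻¹)).reverse).length
      rw [List.length_append, List.length_reverse, List.length_map]
      omega
    have h2 : off n + (word n).length - 1 < off (n + 1) := by
      rw [hoffsucc n]; omega
    rw [hpp _ _ h2]
    have h3 : off n + (word n).length - 1 + 1 = off n + (word n).length := by omega
    rw [h3]
    have h4 : (J (n + 1)).take (off n + (word n).length) = J n ++ word n := by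
      rw [hJsucc n, hoffdef]
      show (J n ++ block n).take ((J n).length + (word n).length) = J n ++ word n
      rw [List.take_append, Nat.add_sub_cancel_left, htake_block n, List.take_of_length_le (by omega)]
    rw [h4, List.prod_append, hJprod n, one_mul]
  -- the φ-side is trivially ι-Cauchy
  have hHconst : (partialProd fun p => φ (x p)) = fun _ => (1 : H) := by
    funext p
    rw [partialProd]
    apply List.prod_eq_one
    intro y hy
    rw [List.mem_map] at hy
    obtain ⟨i, -, rfl⟩ := hy
    exact hker i
  have hHiota : IotaCauchy (partialProd fun p => φ (x p)) := by
    obtain ⟨mH, hcomp, hinvH⟩ := exists_leftInvariant_metric H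
    refine ⟨mH, hcomp, hinvH, ?_⟩
    rw [hHconst]
    exact @cauchySeq_const H ℕ mH.toUniformSpace _ _ 1
  have hGiota : IotaCauchy (partialProd x) := (h x htend).2 hHiota
  obtain ⟨N, hN⟩ := iotaCauchy_left hGiota W₀ hW₀
  -- derive the contradiction
  set p := off (N + 1) - 1 with hpdef
  set q := off (N + 1) + (word (N + 1)).length - 1 with hqdef
  have hpN : N ≤ p := by
    have := hoffge (N + 1)
    rw [hpdef]; omega
  have hqN : N ≤ q := by
    have := hoffge (N + 1)
    have := hwlen (N + 1)
    rw [hqdef]; omega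
  have := hN p hpN q hqN
  rw [hpp_end N] at this
  have hq' : partialProd x q = (word (N + 1)).prod := hpp_mid (N + 1)
  rw [hq'] at this
  simp only [inv_one, one_mul] at this
  exact hwordprod (N + 1) this
end

section
/- Let p, q ∈ [1, ∞) and let A_p = {v ∈ ℓ_p : v(n) ∈ 2^{-n}ℤ for all n}, a closed additive subgroup of ℓ_p. If there exists an injective additive map from the group X = {(t_j) ∈ ℝ^ω : t_j ∈ 2^{-j}ℤ for all j} into sequences satisfying: for all (t_j) ∈ X, (t_j) ∈ ℓ_p ⟺ (t_j) ∈ ℓ_q, then p = q. -/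
/-!
For `p < q` the sequence `a j = j ^ (-1/p)` lies in `ℓ_q` but not in `ℓ_p`. Rounding `a j` down
to the grid `2⁻ʲℤ` changes it by less than `2⁻ʲ`, and the geometric sequence `2⁻ʲ` lies in every
`ℓ_r`, so the rounded sequence still lies in `ℓ_q` and not in `ℓ_p`.
-/

noncomputable def dyadicFloor (j : ℕ) (x : ℝ) : ℝ :=
  (2 : ℝ) ^ (-(j : ℤ)) * ⌊(2 : ℝ) ^ j * x⌋

lemma two_zpow_neg_natCast (j : ℕ) : (2 : ℝ) ^ (-(j : ℤ)) = ((2 : ℝ) ^ j)⁻¹ := by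
  rw [zpow_neg, zpow_natCast]

lemma dyadicFloor_le (j : ℕ) (x : ℝ) : dyadicFloor j x ≤ x := by
  rw [dyadicFloor, two_zpow_neg_natCast, inv_mul_le_iff₀ (by positivity)]
  exact Int.floor_le _

lemma sub_dyadicFloor_lt (j : ℕ) (x : ℝ) : x - dyadicFloor j x < (2 : ℝ) ^ (-(j : ℤ)) := by
  rw [dyadicFloor, two_zpow_neg_natCast, sub_lt_iff_lt_add', ← mul_add_one,
    lt_inv_mul_iff₀ (by positivity)]
  exact Int.lt_floor_add_one _

lemma memℓp_ofReal_iff {ι : Type*} {p : ℝ} (hp : 0 < p) {f : ι → ℝ} :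
    Memℓp f (ENNReal.ofReal p) ↔ Summable fun i => |f i| ^ p := by
  rw [memℓp_gen_iff (by rwa [ENNReal.toReal_ofReal hp.le]), ENNReal.toReal_ofReal hp.le]
  simp only [Real.norm_eq_abs]

lemma memℓp_natCast_rpow_neg_inv_iff {p r : ℝ} (hp : 0 < p) (hr : 0 < r) :
    Memℓp (fun j : ℕ => (j : ℝ) ^ (-p⁻¹)) (ENNReal.ofReal r) ↔ p < r := by
  have hpow (j : ℕ) : |(j : ℝ) ^ (-p⁻¹)| ^ r = (j : ℝ) ^ (-p⁻¹ * r) := by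
    rw [abs_of_nonneg (by positivity), Real.rpow_mul (Nat.cast_nonneg j)]
  rw [memℓp_ofReal_iff hr]
  simp only [hpow, Real.summable_nat_rpow, neg_mul, neg_lt_neg_iff, one_lt_inv_mul₀ hp]

lemma memℓp_sub_dyadicFloor {r : ℝ} (hr : 0 < r) (x : ℕ → ℝ) :
    Memℓp (fun j => x j - dyadicFloor j (x j)) (ENNReal.ofReal r) := by
  have hgeom : Summable fun j : ℕ => ((1 / 2 : ℝ) ^ r) ^ j :=
    summable_geometric_of_lt_one (by positivity) (Real.rpow_lt_one (by norm_num) (by norm_num) hr)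
  rw [memℓp_ofReal_iff hr]
  refine hgeom.of_nonneg_of_le (fun j => by positivity) fun j => ?_
  have herr_nonneg := sub_nonneg.2 (dyadicFloor_le j (x j))
  rw [abs_of_nonneg herr_nonneg, Real.rpow_pow_comm (by norm_num), one_div, inv_pow,
    ← two_zpow_neg_natCast]
  exact Real.rpow_le_rpow herr_nonneg (sub_dyadicFloor_lt j (x j)).le hr.le

theorem exists_dyadic_summable_rpow_not_summable_rpow {p q : ℝ} (hp : 0 < p) (hpq : p < q) :
    ∃ t : ℕ → ℝ, (∀ j : ℕ, ∃ k : ℤ, t j = (2 : ℝ) ^ (-(j : ℤ)) * k) ∧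
      Summable (fun j => |t j| ^ q) ∧ ¬ Summable (fun j => |t j| ^ p) := by
  have hq : 0 < q := hp.trans hpq
  set a : ℕ → ℝ := fun j => (j : ℝ) ^ (-p⁻¹)
  set e : ℕ → ℝ := fun j => a j - dyadicFloor j (a j)
  have ht : (fun j => dyadicFloor j (a j)) = a - e := by
    ext j
    simp [e]
  refine ⟨fun j => dyadicFloor j (a j), fun j => ⟨_, rfl⟩, ?_, fun hsum => ?_⟩
  · rw [← memℓp_ofReal_iff hq, ht]
    exact ((memℓp_natCast_rpow_neg_inv_iff hp hq).2 hpq).sub (memℓp_sub_dyadicFloor hq a)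
  · rw [← memℓp_ofReal_iff hp, ht] at hsum
    have ha := hsum.add (memℓp_sub_dyadicFloor hp a)
    rw [sub_add_cancel, memℓp_natCast_rpow_neg_inv_iff hp hp] at ha
    exact lt_irrefl p ha

/-- If for every sequence `(t_j)` with `t_j ∈ 2⁻ʲ·ℤ` for all `j`, the summability of
`|t_j|^p` is equivalent to the summability of `|t_j|^q` (with `p, q ∈ [1, ∞)`),
then `p = q`. -/
theorem stmt_15 (p q : ℝ) (hp : 1 ≤ p) (hq : 1 ≤ q)
    (h : ∀ t : ℕ → ℝ, (∀ j : ℕ, ∃ k : ℤ, t j = (2 : ℝ) ^ (-(j : ℤ)) * k) →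
      (Summable (fun j => |t j| ^ p) ↔ Summable (fun j => |t j| ^ q))) :
    p = q := by
  by_contra hne
  rcases lt_or_gt_of_ne hne with hpq | hqp
  · obtain ⟨t, hdyadic, hsum_q, hnot_p⟩ :=
      exists_dyadic_summable_rpow_not_summable_rpow (by linarith) hpq
    exact hnot_p ((h t hdyadic).2 hsum_q)
  · obtain ⟨t, hdyadic, hsum_p, hnot_q⟩ :=
      exists_dyadic_summable_rpow_not_summable_rpow (by linarith) hqp
    exact hnot_q ((h t hdyadic).1 hsum_p)
end

section
/- For p ∈ [1, ∞) and a ∈ c_0 with infinite support I_a = {n : a(n) ≠ 0}, the group A_{p,a} = {v ∈ ℓ_p : v(n) ∈ a(n)ℤ for all n} with the topology inherited from ℓ_p is a totally disconnected Polish group that is not non-archimedean. -/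
/-!
`A_{p,a}` is closed in `ℓ_p`, which is separable for `p < ∞`, so it is Polish. The coordinates
map it continuously and injectively into the product of the discrete groups `a(n)ℤ`, so it is
totally disconnected. In a subgroup of a real normed space, an open subgroup lying in the unit
ball is trivial because the multiples of a nonzero vector are unbounded; hence such a group is
non-archimedean only if it is discrete. But `A_{p,a}` is not discrete: the vectors `a(n) eₙ`
lie in it, tend to `0`, and are nonzero for the infinitely many `n` in the support of `a`.
-/

open Filter Topology

/-- The subgroup `A_{p,a} = {v ∈ ℓ_p : ∀ n, v n ∈ a n · ℤ}` of `ℓ_p`. -/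
noncomputable def A (p : ENNReal) [Fact (1 ≤ p)] (a : ℕ → ℝ) :
    AddSubgroup (lp (fun _ : ℕ => ℝ) p) where
  carrier := {v | ∀ n : ℕ, ∃ k : ℤ, (v : ∀ _ : ℕ, ℝ) n = a n * k}
  zero_mem' := by
    intro n
    exact ⟨0, by simp⟩
  add_mem' := by
    rintro v w hv hw n
    obtain ⟨k1, h1⟩ := hv n
    obtain ⟨k2, h2⟩ := hw n
    exact ⟨k1 + k2, by
      change (v : ∀ _ : ℕ, ℝ) n + (w : ∀ _ : ℕ, ℝ) n = _
      rw [h1, h2]; push_cast; ring⟩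
  neg_mem' := by
    rintro v hv n
    obtain ⟨k, h1⟩ := hv n
    exact ⟨-k, by
      change -(v : ∀ _ : ℕ, ℝ) n = _
      rw [h1]; push_cast; ring⟩

/-- An additive topological group is non-archimedean if it has a neighborhood basis of `0`
consisting of open subgroups. -/
def NonArchimedeanAdd (G : Type*) [AddGroup G] [TopologicalSpace G] : Prop :=
  ∀ U ∈ 𝓝 (0 : G), ∃ K : AddSubgroup G, IsOpen (K : Set G) ∧ (K : Set G) ⊆ U

open TopologicalSpace

section lpSeparable

variable {α : Type*} {E : α → Type*} [∀ i, NormedAddCommGroup (E i)] {p : ENNReal} [Fact (1 ≤ p)]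

theorem lp.continuous_single [DecidableEq α] (i : α) :
    Continuous (lp.single (E := E) p i) :=
  AddMonoidHomClass.continuous_of_bound (lp.singleAddMonoidHom (E := E) p i) 1 fun x => by
    simp [lp.norm_single (zero_lt_one.trans_le Fact.out)]

theorem lp.separableSpace [Countable α] [∀ i, SeparableSpace (E i)] (hp : p ≠ ⊤) :
    SeparableSpace (lp E p) := by
  classical
  have hS : IsSeparable (⋃ i, Set.range (lp.single (E := E) p i)) :=
    .iUnion fun i => isSeparable_range (lp.continuous_single i)
  rw [← isSeparable_univ_iff]
  refine (hS.span (R := ℕ)).closure.mono fun f _ => ?_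
  refine mem_closure_of_tendsto (lp.hasSum_single hp f) (Eventually.of_forall fun s => ?_)
  exact Submodule.sum_mem _ fun i _ => Submodule.subset_span (Set.mem_iUnion_of_mem i ⟨_, rfl⟩)

end lpSeparable

theorem AddSubgroup.eq_bot_of_isBounded {E : Type*} [NormedAddCommGroup E] [NormedSpace ℝ E]
    {K : AddSubgroup E} (hK : Bornology.IsBounded (K : Set E)) : K = ⊥ := by
  obtain ⟨C, hC⟩ := hK.exists_norm_le
  refine (AddSubgroup.eq_bot_iff_forall K).2 fun x hx => by_contra fun hx0 => ?_
  obtain ⟨n, hn⟩ := exists_nat_gt (C / ‖x‖)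
  have hnx : (n : ℝ) * ‖x‖ ≤ C := by
    simpa [RCLike.norm_nsmul ℝ] using hC _ (K.nsmul_mem hx n)
  rw [div_lt_iff₀ (norm_pos_iff.2 hx0)] at hn
  linarith

theorem AddSubgroup.discreteTopology_of_nonArchimedeanAdd {E : Type*} [NormedAddCommGroup E]
    [NormedSpace ℝ E] {H : AddSubgroup E} (hH : NonArchimedeanAdd H) : DiscreteTopology H := by
  obtain ⟨K, hKopen, hK⟩ := hH (Metric.ball 0 1) (Metric.ball_mem_nhds 0 one_pos)
  have hbdd : Bornology.IsBounded (K.map H.subtype : Set E) := by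
    refine (Metric.isBounded_ball (x := (0 : E)) (r := 1)).subset ?_
    rintro _ ⟨x, hx, rfl⟩
    simpa using hK hx
  have hKbot : K = ⊥ := (AddSubgroup.map_eq_bot_iff_of_injective K H.subtype_injective).1
    (AddSubgroup.eq_bot_of_isBounded hbdd)
  rw [discreteTopology_iff_isOpen_singleton_zero]
  simpa [hKbot] using hKopen

theorem totallyDisconnectedSpace_of_injective {X Y : Type*} [TopologicalSpace X]
    [TopologicalSpace Y] [TotallyDisconnectedSpace Y] {f : X → Y} (hf : Continuous f)
    (hinj : Function.Injective f) : TotallyDisconnectedSpace X :=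
  ⟨isTotallyDisconnected_of_image hf.continuousOn hinj
    (isTotallyDisconnected_of_totallyDisconnectedSpace _)⟩

section A

variable {p : ENNReal} [Fact (1 ≤ p)] {a : ℕ → ℝ}

theorem mem_A_iff {v : lp (fun _ : ℕ => ℝ) p} :
    v ∈ A p a ↔ ∀ n, v n ∈ AddSubgroup.zmultiples (a n) := by
  refine forall_congr' fun n => ?_
  rw [AddSubgroup.mem_zmultiples_iff]
  exact exists_congr fun k => by rw [zsmul_eq_mul, mul_comm, eq_comm]

theorem continuous_lp_apply (n : ℕ) : Continuous fun v : lp (fun _ : ℕ => ℝ) p => v n :=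
  (continuous_apply n).comp lp.uniformContinuous_coe.continuous

theorem isClosed_A : IsClosed (A p a : Set (lp (fun _ : ℕ => ℝ) p)) := by
  have hA : (A p a : Set (lp (fun _ : ℕ => ℝ) p)) =
      ⋂ n, (fun v : lp (fun _ : ℕ => ℝ) p => v n) ⁻¹' AddSubgroup.zmultiples (a n) := by
    ext v
    simp [mem_A_iff]
  rw [hA]
  exact isClosed_iInter fun n => AddSubgroup.isClosed_of_discrete.preimage (continuous_lp_apply n)

instance : TotallyDisconnectedSpace (A p a) :=
  totallyDisconnectedSpace_of_injective
    (f := fun v n => (⟨(v : lp (fun _ : ℕ => ℝ) p) n, mem_A_iff.1 v.2 n⟩ :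
      AddSubgroup.zmultiples (a n)))
    (continuous_pi fun n => (continuous_lp_apply n).comp continuous_subtype_val |>.subtype_mk _)
    fun _ _ h => Subtype.ext <| lp.ext <| funext fun n => congr_arg Subtype.val (congr_fun h n)

theorem single_mem_A (n : ℕ) : lp.single p n (a n) ∈ A p a := by
  refine mem_A_iff.2 fun m => ?_
  rcases eq_or_ne m n with rfl | hm
  · simp
  · simp [hm]

theorem not_discreteTopology_A (ha : Tendsto a atTop (𝓝 0)) (hsupp : {n | a n ≠ 0}.Infinite) :
    ¬ DiscreteTopology (A p a) := by
  intro hdisc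
  have hlim : Tendsto (fun n => (⟨lp.single p n (a n), single_mem_A n⟩ : A p a)) atTop (𝓝 0) := by
    rw [tendsto_iff_norm_sub_tendsto_zero]
    simpa [lp.norm_single (zero_lt_one.trans_le Fact.out)] using ha.norm
  rw [nhds_discrete, tendsto_pure] at hlim
  refine (Nat.frequently_atTop_iff_infinite.2 hsupp) (hlim.mono fun n hn => ?_)
  simpa [lp.single_apply_self] using congr_arg (fun v : A p a => (v : lp (fun _ : ℕ => ℝ) p) n) hn

end A

/-- For `1 ≤ p < ∞` and a null sequence `a` with infinite support, the group `A_{p,a}`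
with the topology inherited from `ℓ_p` is a totally disconnected Polish group that is
not non-archimedean. -/
theorem stmt_16 (p : ENNReal) [Fact (1 ≤ p)] (hp : p ≠ ⊤)
    (a : ℕ → ℝ) (ha : Tendsto a atTop (𝓝 0)) (hsupp : {n : ℕ | a n ≠ 0}.Infinite) :
    PolishSpace ↥(A p a) ∧
    connectedComponent (0 : ↥(A p a)) = {0} ∧
    ¬ NonArchimedeanAdd ↥(A p a) := by
  have : SeparableSpace (lp (fun _ : ℕ => ℝ) p) := lp.separableSpace hp
  exact ⟨isClosed_A.polishSpace, connectedComponent_eq_singleton 0,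
    fun h => not_discreteTopology_A ha hsupp (AddSubgroup.discreteTopology_of_nonArchimedeanAdd h)⟩
end

section
/- Let G be a TSI Polish group with compatible two-sided invariant metric d_G, and let V ∋ 1_G be an open set witnessing that G is uniformly NSS. Suppose S : G → H is a continuous homomorphism into a TSI Polish group H with metric d_H, and suppose there is k_0 such that for every sequence (g_q) in the ball V_{k_0} = {g : d_G(1_G,g) < 2^{-k_0}}, S(g_q) → 1_H implies g_q → 1_G. Then with U = {g : d_G(1_G,g) < 2^{-k_0-2}}, the restriction S↾cl(U) is a topological embedding and S(cl(U)) is closed in H. -/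
open Filter Topology Metric

/-!
Left invariance of `d_G` gives `d_G(a, b) = d_G(1, a⁻¹ b)`, and any two points of `cl U` are
at distance `≤ 2 · 2^{-k₀-2} < 2^{-k₀}`. So for `a, b ∈ cl U` the quotient `a⁻¹ b` lies in
`V_{k₀}`, and the hypothesis on `S` turns `S(a_p)⁻¹ S(b_p) → 1` into `d_G(a_p, b_p) → 0`.
With `b_p = a` constant this makes `S↾cl U` a homeomorphism onto its image; applied to pairs
of indices of a sequence whose images converge in `H`, it shows that the sequence is Cauchy,
so by completeness it converges to a point of `cl U` whose image is the limit.
-/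

section Reflects

variable {G H : Type*} [TopologicalSpace G] [One G] [TopologicalSpace H] [One H]

def ReflectsTendstoOneOn (f : G → H) (W : Set G) : Prop :=
  ∀ g : ℕ → G, (∀ q, g q ∈ W) → Tendsto (fun q => f (g q)) atTop (𝓝 1) → Tendsto g atTop (𝓝 1)

theorem ReflectsTendstoOneOn.tendsto_one {f : G → H} {W : Set G} (hf : ReflectsTendstoOneOn f W)
    {ι : Type*} {l : Filter ι} [l.IsCountablyGenerated] {g : ι → G} (hg : ∀ i, g i ∈ W)
    (hfg : Tendsto (fun i => f (g i)) l (𝓝 1)) : Tendsto g l (𝓝 1) :=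
  tendsto_of_seq_tendsto fun u hu => hf (g ∘ u) (fun q => hg (u q)) (hfg.comp hu)

end Reflects

section LeftInvariant

variable {G H : Type*} [Group G] [MetricSpace G] [IsIsometricSMul G G] [Group H] [TopologicalSpace H]

theorem dist_one_inv_mul (a b : G) : dist 1 (a⁻¹ * b) = dist a b := by
  rw [← dist_mul_left a, mul_one, mul_inv_cancel_left]

variable {S : G →* H} {r : ℝ} {K : Set G} {ι : Type*} {l : Filter ι} [l.IsCountablyGenerated]

theorem ReflectsTendstoOneOn.tendsto_dist_of_tendsto_inv_mul
    (hS : ReflectsTendstoOneOn S (ball 1 r)) (hK : ∀ a ∈ K, ∀ b ∈ K, dist a b < r)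
    {x y : ι → G} (hx : ∀ i, x i ∈ K) (hy : ∀ i, y i ∈ K)
    (hxy : Tendsto (fun i => (S (x i))⁻¹ * S (y i)) l (𝓝 1)) :
    Tendsto (fun i => dist (x i) (y i)) l (𝓝 0) := by
  have hmem : ∀ i, (x i)⁻¹ * y i ∈ ball 1 r := fun i =>
    mem_ball'.2 ((dist_one_inv_mul _ _).trans_lt (hK _ (hx i) _ (hy i)))
  have hlim := hS.tendsto_one hmem (by simpa only [map_mul, map_inv] using hxy)
  simpa only [dist_comm _ (1 : G), dist_one_inv_mul] using tendsto_iff_dist_tendsto_zero.1 hlim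

variable [IsTopologicalGroup H]

theorem ReflectsTendstoOneOn.tendsto_of_tendsto_map
    (hS : ReflectsTendstoOneOn S (ball 1 r)) (hK : ∀ a ∈ K, ∀ b ∈ K, dist a b < r)
    {x : ι → G} {a : G} (hx : ∀ i, x i ∈ K) (ha : a ∈ K)
    (hSx : Tendsto (fun i => S (x i)) l (𝓝 (S a))) : Tendsto x l (𝓝 a) := by
  have hquot : Tendsto (fun i => (S a)⁻¹ * S (x i)) l (𝓝 1) := by
    simpa using (tendsto_const_nhds (x := (S a)⁻¹)).mul hSx
  have hdist := hS.tendsto_dist_of_tendsto_inv_mul hK (fun _ => ha) hx hquot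
  exact tendsto_iff_dist_tendsto_zero.2 (by simpa only [dist_comm a] using hdist)

theorem ReflectsTendstoOneOn.isEmbedding_restrict [FirstCountableTopology H]
    (hS : ReflectsTendstoOneOn S (ball 1 r)) (hSc : Continuous S)
    (hK : ∀ a ∈ K, ∀ b ∈ K, dist a b < r) : IsEmbedding (fun x : K => S x) := by
  have hind : IsInducing (fun x : K => S x) := by
    refine isInducing_iff_nhds.2 fun a =>
      le_antisymm ((hSc.comp continuous_subtype_val).tendsto a).le_comap ?_
    rw [nhds_subtype, ← tendsto_iff_comap]
    exact hS.tendsto_of_tendsto_map hK Subtype.prop a.2 tendsto_comap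
  exact ⟨hind, hind.injective⟩

theorem ReflectsTendstoOneOn.isClosed_image [CompleteSpace G] [FirstCountableTopology H]
    [T2Space H] (hS : ReflectsTendstoOneOn S (ball 1 r)) (hSc : Continuous S)
    (hK : ∀ a ∈ K, ∀ b ∈ K, dist a b < r) (hKc : IsClosed K) : IsClosed (S '' K) := by
  refine IsSeqClosed.isClosed fun z h hz hzh => ?_
  choose x hxK hxz using hz
  have hcauchy : CauchySeq x := by
    rw [cauchySeq_iff_tendsto_dist_atTop_0]
    refine hS.tendsto_dist_of_tendsto_inv_mul hK (fun n => hxK n.1) (fun n => hxK n.2) ?_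
    rw [← prod_atTop_atTop_eq]
    simpa [hxz] using (hzh.comp tendsto_fst).inv.mul (hzh.comp tendsto_snd)
  obtain ⟨a, ha⟩ := cauchySeq_tendsto_of_complete hcauchy
  refine ⟨a, hKc.mem_of_tendsto ha (Eventually.of_forall hxK), ?_⟩
  exact tendsto_nhds_unique ((hSc.tendsto a).comp ha) (by simpa only [Function.comp_def, hxz] using hzh)

end LeftInvariant

theorem dist_lt_of_mem_closure_ball {X : Type*} [PseudoMetricSpace X] {x a b : X} {c r : ℝ}
    (hcr : 2 * c < r) (ha : a ∈ closure (ball x c)) (hb : b ∈ closure (ball x c)) :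
    dist a b < r :=
  calc dist a b ≤ dist a x + dist b x := dist_triangle_right a b x
    _ ≤ c + c := add_le_add (closure_ball_subset_closedBall ha) (closure_ball_subset_closedBall hb)
    _ < r := by linarith

theorem two_mul_two_zpow_sub_two_lt (k : ℤ) : 2 * (2 : ℝ) ^ (k - 2) < 2 ^ k := by
  rw [zpow_sub₀ two_ne_zero]
  have := zpow_pos (two_pos (α := ℝ)) k
  norm_num
  linarith

theorem stmt_18_general (G H : Type*)
    [Group G] [MetricSpace G] [CompleteSpace G]
    [Group H] [MetricSpace H] [IsTopologicalGroup H]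
    (hGleft : ∀ g h k : G, dist (g * h) (g * k) = dist h k)
    (S : G →* H) (hS : Continuous S) (k₀ : ℕ)
    (hk₀ : ∀ g : ℕ → G, (∀ q, dist (1 : G) (g q) < 2 ^ (-(k₀ : ℤ))) →
      Tendsto (fun q => S (g q)) atTop (𝓝 1) → Tendsto g atTop (𝓝 1)) :
    IsEmbedding (fun x : closure {g : G | dist (1 : G) g < 2 ^ (-(k₀ : ℤ) - 2)} => S x) ∧
    IsClosed (S '' closure {g : G | dist (1 : G) g < 2 ^ (-(k₀ : ℤ) - 2)}) := by
  have : IsIsometricSMul G G := ⟨fun g => Isometry.of_dist_eq (hGleft g)⟩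
  have hreflect : ReflectsTendstoOneOn S (ball 1 (2 ^ (-(k₀ : ℤ)))) :=
    fun g hg => hk₀ g fun q => mem_ball'.1 (hg q)
  have hU : {g : G | dist 1 g < 2 ^ (-(k₀ : ℤ) - 2)} = ball 1 (2 ^ (-(k₀ : ℤ) - 2)) :=
    Set.ext fun _ => mem_ball'.symm
  have hK : ∀ a ∈ closure (ball (1 : G) (2 ^ (-(k₀ : ℤ) - 2))), ∀ b ∈ closure (ball 1 _),
      dist a b < 2 ^ (-(k₀ : ℤ)) := fun a ha b hb =>
    dist_lt_of_mem_closure_ball (two_mul_two_zpow_sub_two_lt _) ha hb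
  rw [hU]
  exact ⟨hreflect.isEmbedding_restrict hS hK, hreflect.isClosed_image hS hK isClosed_closure⟩

/-- Let `G, H` be TSI Polish groups with two-sided invariant metrics, `V` a witness of
uniform NSS for `G`, `S : G → H` a continuous homomorphism, and `k₀` such that for every
sequence `(g_q)` in the ball `V_{k₀} = {g : d(1,g) < 2^{-k₀}}`, `S(g_q) → 1` implies
`g_q → 1`. Then, with `U = {g : d(1,g) < 2^{-k₀-2}}`, the restriction of `S` to the
closure of `U` is a topological embedding and `S(cl U)` is closed in `H`. -/
theorem stmt_18 (G H : Type*)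
    [Group G] [MetricSpace G] [IsTopologicalGroup G] [PolishSpace G] [CompleteSpace G]
    [Group H] [MetricSpace H] [IsTopologicalGroup H] [PolishSpace H] [CompleteSpace H]
    (hGleft : ∀ g h k : G, dist (g * h) (g * k) = dist h k)
    (hGright : ∀ g h k : G, dist (h * g) (k * g) = dist h k)
    (hHleft : ∀ g h k : H, dist (g * h) (g * k) = dist h k)
    (hHright : ∀ g h k : H, dist (h * g) (k * g) = dist h k)
    (V : Set G) (hVopen : IsOpen V) (hV1 : (1 : G) ∈ V)
    (hVnss : ∀ U ∈ 𝓝 (1 : G), ∃ n : ℕ, ∀ g : G, g ∉ U → ∃ m ≤ n, g ^ m ∉ V)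
    (S : G →* H) (hS : Continuous S) (k₀ : ℕ)
    (hk₀ : ∀ g : ℕ → G, (∀ q, dist (1 : G) (g q) < 2 ^ (-(k₀ : ℤ))) →
      Tendsto (fun q => S (g q)) atTop (𝓝 1) → Tendsto g atTop (𝓝 1)) :
    IsEmbedding (fun x : closure {g : G | dist (1 : G) g < 2 ^ (-(k₀ : ℤ) - 2)} => S x) ∧
    IsClosed (S '' closure {g : G | dist (1 : G) g < 2 ^ (-(k₀ : ℤ) - 2)}) :=
  stmt_18_general G H hGleft S hS k₀ hk₀
end
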